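/- arXiv:1205.0676 — 7 statements merged into one kernel-verified Lean document; each statement's English description precedes it below -/
import Mathlib

section
/- Let Γ be a simple directed graph, R an integral domain, W the free R-module with basis V(Γ), and f a weight function assigning a nonzero element of R to every edge. For each vertex x define the R-linear endomorphism θ_x of W by θ_x(y) = y for y ≠ x and θ_x(x) = Σ_{z → x} f(z,x)·z (sum over all edges into x). Then the assignment x ↦ θ_x extends to a well-defined monoid homomorphism R_f : HK_Γ → End_R(W). -/
/-- One-step Hecke-Kiselman edge relations for a directed graph with edge relation `E`. -/
def HKRel {V : Type*} (E : V → V → Prop) : FreeMonoid V → FreeMonoid V → Prop := fun a b =>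
  (∃ x : V, a = FreeMonoid.of x * FreeMonoid.of x ∧ b = FreeMonoid.of x) ∨
  (∃ x y : V, x ≠ y ∧ ¬ E x y ∧ ¬ E y x ∧
    a = FreeMonoid.of x * FreeMonoid.of y ∧ b = FreeMonoid.of y * FreeMonoid.of x) ∨
  (∃ x y : V, E x y ∧ ¬ E y x ∧
    a = FreeMonoid.of x * FreeMonoid.of y * FreeMonoid.of x ∧
    b = FreeMonoid.of y * FreeMonoid.of x * FreeMonoid.of y) ∨
  (∃ x y : V, E x y ∧ ¬ E y x ∧
    a = FreeMonoid.of x * FreeMonoid.of y * FreeMonoid.of x ∧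
    b = FreeMonoid.of x * FreeMonoid.of y) ∨
  (∃ x y : V, E x y ∧ E y x ∧
    a = FreeMonoid.of x * FreeMonoid.of y * FreeMonoid.of x ∧
    b = FreeMonoid.of y * FreeMonoid.of x * FreeMonoid.of y)

/-- The congruence on the free monoid generated by the Hecke-Kiselman relations. -/
def HKCon {V : Type*} (E : V → V → Prop) : Con (FreeMonoid V) := conGen (HKRel E)

/-- The Hecke-Kiselman monoid of the directed graph `(V, E)`. -/
def HK {V : Type*} (E : V → V → Prop) := (HKCon E).Quotient

instance {V : Type*} (E : V → V → Prop) : Monoid (HK E) :=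
  inferInstanceAs (Monoid (HKCon E).Quotient)

/-- The canonical quotient map. -/
def HKmk {V : Type*} (E : V → V → Prop) : FreeMonoid V →* HK E := (HKCon E).mk'

/-- The content of an element: vertices occurring in some representing word. -/
def elemContent {V : Type*} (E : V → V → Prop) (x : HK E) : Set V :=
  {v | ∃ w : FreeMonoid V, HKmk E w = x ∧ v ∈ FreeMonoid.toList w}

open scoped Classical

/-- The atomic endomorphism `θ_x` of the free module `V →₀ R`:
`θ_x(y) = y` for `y ≠ x`, and `θ_x(x) = Σ_{z → x} f z x • z`. -/
noncomputable def theta {V : Type*} [Fintype V] {R : Type*} [CommRing R]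
    (E : V → V → Prop) (f : V → V → R) (x : V) : Module.End R (V →₀ R) :=
  Finsupp.lsum R fun y =>
    if y = x then ∑ z : V, if E z x then f z x • (Finsupp.lsingle z : R →ₗ[R] V →₀ R) else 0
    else Finsupp.lsingle y

/-- The representation of the free monoid on words, sending a word to the composition of
the atomic endomorphisms of its letters. -/
noncomputable def Rword {V : Type*} [Fintype V] {R : Type*} [CommRing R]
    (E : V → V → Prop) (f : V → V → R) : FreeMonoid V →* Module.End R (V →₀ R) :=
  FreeMonoid.lift (theta E f)

/-!
Each `θ_x` is a rank-one perturbation of the identity: `θ_x v = v + v(x) • s_x` with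
`s_x = θ_x(x) - x`. Without a loop at `x`, `s_x` has `x`-coordinate `-1`, so `θ_x` is
idempotent; and `s_x` vanishes at every vertex `y ≠ x` with no edge `y → x`, so then `θ_y`
fixes `s_x` and `θ_y θ_x = θ_y + θ_x - 1`. For non-adjacent `x, y` this identity is symmetric
and gives commutation; for an edge `x → y` without edge back it gives, with idempotence,
`θ_x θ_y θ_x = θ_x θ_y = θ_y θ_x θ_y`. Bidirected edges are excluded, so every defining
relation of `HK_Γ` holds in `End_R(W)`.
-/

theorem mul_mul_eq_mul_of_mul_eq_add_sub_one {M : Type*} [Ring M] {p q : M}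
    (hp : IsIdempotentElem p) (h : q * p = q + p - 1) : p * q * p = p * q := by
  rw [mul_assoc, h, mul_sub, mul_add, hp.eq, mul_one, add_sub_cancel_right]

theorem mul_mul_eq_mul_of_mul_eq_add_sub_one' {M : Type*} [Ring M] {p q : M}
    (hq : IsIdempotentElem q) (h : q * p = q + p - 1) : q * p * q = p * q := by
  rw [h, sub_mul, add_mul, hq.eq, one_mul, add_sub_cancel_left]

namespace HeckeKiselman

variable {V : Type*} [Fintype V] {R : Type*} [CommRing R] (E : V → V → Prop) (f : V → V → R)

noncomputable def thetaShift (x : V) : V →₀ R :=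
  theta E f x (Finsupp.single x 1) - Finsupp.single x 1

theorem theta_single_of_ne {x y : V} (h : y ≠ x) (c : R) :
    theta E f x (Finsupp.single y c) = Finsupp.single y c := by
  rw [theta, Finsupp.lsum_single, if_neg h, Finsupp.lsingle_apply]

theorem theta_single_self_apply (x z : V) (c : R) :
    theta E f x (Finsupp.single x c) z = if E z x then f z x * c else 0 := by
  rw [theta, Finsupp.lsum_single, if_pos rfl, LinearMap.sum_apply, Finsupp.finsetSum_apply,
    Finset.sum_eq_single_of_mem z (Finset.mem_univ z)]
  · by_cases hz : E z x <;> simp [hz]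
  · intro i _ hiz
    by_cases hi : E i x <;> simp [hi, Finsupp.single_eq_of_ne' hiz]

theorem theta_apply (x : V) (v : V →₀ R) :
    theta E f x v = v + v x • thetaShift E f x := by
  induction v using Finsupp.induction_linear with
  | zero => simp
  | add v w hv hw => rw [map_add, hv, hw, Finsupp.add_apply, add_smul]; abel
  | single y c =>
    by_cases h : y = x
    · subst h
      rw [thetaShift, Finsupp.single_eq_same, smul_sub, Finsupp.smul_single_one,
        ← map_smul, Finsupp.smul_single_one]
      abel
    · rw [theta_single_of_ne E f h, Finsupp.single_eq_of_ne' h, zero_smul, add_zero]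

theorem thetaShift_apply_of_ne {x z : V} (hzx : z ≠ x) (hE : ¬E z x) :
    thetaShift E f x z = 0 := by
  simp [thetaShift, theta_single_self_apply, hE, Finsupp.single_eq_of_ne hzx]

theorem thetaShift_apply_self {x : V} (hx : ¬E x x) : thetaShift E f x x = -1 := by
  simp [thetaShift, theta_single_self_apply, hx]

theorem theta_eq_self_of_apply_eq_zero {x : V} {v : V →₀ R} (hv : v x = 0) :
    theta E f x v = v := by
  rw [theta_apply, hv, zero_smul, add_zero]

theorem theta_apply_self_eq_zero {x : V} (hx : ¬E x x) (v : V →₀ R) :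
    theta E f x v x = 0 := by
  rw [theta_apply, Finsupp.add_apply, Finsupp.smul_apply, thetaShift_apply_self E f hx,
    smul_eq_mul, mul_neg_one, add_neg_cancel]

theorem theta_isIdempotentElem {x : V} (hx : ¬E x x) : IsIdempotentElem (theta E f x) :=
  LinearMap.ext fun v => theta_eq_self_of_apply_eq_zero E f (theta_apply_self_eq_zero E f hx v)

theorem theta_mul_theta {x y : V} (hne : y ≠ x) (hE : ¬E y x) :
    theta E f y * theta E f x = theta E f y + theta E f x - 1 := by
  refine LinearMap.ext fun v => ?_
  have hshift : theta E f y (thetaShift E f x) = thetaShift E f x :=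
    theta_eq_self_of_apply_eq_zero E f (thetaShift_apply_of_ne E f hne hE)
  simp only [Module.End.mul_apply, LinearMap.sub_apply, LinearMap.add_apply, Module.End.one_apply]
  rw [theta_apply E f x v, map_add, map_smul, hshift]
  abel

theorem rword_eq_of_hkRel (hloop : ∀ x, ¬E x x) (hbidir : ∀ x y, ¬(E x y ∧ E y x))
    {a b : FreeMonoid V} (h : HKRel E a b) : Rword E f a = Rword E f b := by
  have hne : ∀ {x y : V}, E x y → y ≠ x := fun hxy hyx => hloop _ (hyx ▸ hxy)
  rcases h with ⟨x, rfl, rfl⟩ | ⟨x, y, hxy, hExy, hEyx, rfl, rfl⟩ |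
    ⟨x, y, hExy, hEyx, rfl, rfl⟩ | ⟨x, y, hExy, hEyx, rfl, rfl⟩ | ⟨x, y, hExy, hEyx, -, -⟩
  · simp only [Rword, map_mul, FreeMonoid.lift_eval_of]
    exact (theta_isIdempotentElem E f (hloop x)).eq
  · simp only [Rword, map_mul, FreeMonoid.lift_eval_of]
    rw [theta_mul_theta E f hxy hExy, theta_mul_theta E f hxy.symm hEyx, add_comm]
  · simp only [Rword, map_mul, FreeMonoid.lift_eval_of]
    have hyx := theta_mul_theta E f (hne hExy) hEyx
    exact (mul_mul_eq_mul_of_mul_eq_add_sub_one (M := Module.End R (V →₀ R))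
      (theta_isIdempotentElem E f (hloop x)) hyx).trans
      (mul_mul_eq_mul_of_mul_eq_add_sub_one' (M := Module.End R (V →₀ R))
        (theta_isIdempotentElem E f (hloop y)) hyx).symm
  · simp only [Rword, map_mul, FreeMonoid.lift_eval_of]
    exact mul_mul_eq_mul_of_mul_eq_add_sub_one (M := Module.End R (V →₀ R))
      (theta_isIdempotentElem E f (hloop x)) (theta_mul_theta E f (hne hExy) hEyx)
  · exact absurd ⟨hExy, hEyx⟩ (hbidir x y)

end HeckeKiselman

theorem hk_weighted_representation_well_defined_general {V : Type*} [Fintype V]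
    {R : Type*} [CommRing R]
    (E : V → V → Prop) (hloop : ∀ x, ¬ E x x) (hbidir : ∀ x y, ¬ (E x y ∧ E y x))
    (f : V → V → R) :
    ∃ φ : HK E →* Module.End R (V →₀ R), ∀ w : FreeMonoid V, φ (HKmk E w) = Rword E f w :=
  ⟨(HKCon E).lift (Rword E f)
      (Con.conGen_le.2 fun _ _ => HeckeKiselman.rword_eq_of_hkRel E f hloop hbidir),
    fun _ => rfl⟩

/-- For a simple directed graph (no loops, no bidirected edges) and a weight function with
nonzero values in an integral domain, the assignment `x ↦ θ_x` extends to a well-defined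
monoid homomorphism `R_f : HK_Γ → End_R(W)`. -/
theorem hk_weighted_representation_well_defined {V : Type*} [Fintype V]
    {R : Type*} [CommRing R] [IsDomain R]
    (E : V → V → Prop) (hloop : ∀ x, ¬ E x x) (hbidir : ∀ x y, ¬ (E x y ∧ E y x))
    (f : V → V → R) (hf : ∀ x y, E x y → f x y ≠ 0) :
    ∃ φ : HK E →* Module.End R (V →₀ R), ∀ w : FreeMonoid V, φ (HKmk E w) = Rword E f w :=
  hk_weighted_representation_well_defined_general E hloop hbidir f
end

section
/- Let Γ be a simple directed graph with at most one directed edge between any pair of vertices, let A be a set of vertices each of which is a source or a sink of Γ, and let w be any word over V(Γ). Then the equivalence class [w] in HK_Γ contains a subword of w which is multiplicity free with respect to every vertex in A (each vertex of A occurs at most once). -/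
/-!
If `a` is a source then `a x a = a x` for every vertex `x`: this is a defining relation when
`a → x`, and follows from `a x = x a` and `a² = a` when there is no edge. The identity survives
multiplying `x` by a further such factor, so `a u a = a u` for every word `u`; dually
`a u a = u a` when `a` is a sink. Hence of two occurrences of a vertex of `A` one can always be
deleted without changing the class, and deleting until no vertex of `A` repeats gives the subword.
-/

open FreeMonoid

theorem IsIdempotentElem.mul_prod_mul_eq_mul_prod {M : Type*} [Monoid M] {a : M}
    (ha : IsIdempotentElem a) :
    ∀ l : List M, (∀ x ∈ l, a * x * a = a * x) → a * l.prod * a = a * l.prod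
  | [], _ => by simpa using ha.eq
  | x :: l, hl => by
    have hx := hl x List.mem_cons_self
    have ih := ha.mul_prod_mul_eq_mul_prod l fun y hy => hl y (List.mem_cons_of_mem x hy)
    calc a * (x :: l).prod * a = a * x * a * (l.prod * a) := by
          rw [hx, List.prod_cons]; simp only [mul_assoc]
      _ = a * x * (a * l.prod * a) := by simp only [mul_assoc]
      _ = a * x * a * l.prod := by rw [ih]; simp only [mul_assoc]
      _ = a * (x :: l).prod := by rw [hx, List.prod_cons, mul_assoc]

theorem IsIdempotentElem.mul_prod_mul_eq_prod_mul {M : Type*} [Monoid M] {a : M}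
    (ha : IsIdempotentElem a) :
    ∀ l : List M, (∀ x ∈ l, a * x * a = x * a) → a * l.prod * a = l.prod * a
  | [], _ => by simpa using ha.eq
  | x :: l, hl => by
    have hx := hl x List.mem_cons_self
    have ih := ha.mul_prod_mul_eq_prod_mul l fun y hy => hl y (List.mem_cons_of_mem x hy)
    calc a * (x :: l).prod * a = a * x * (a * l.prod * a) := by
          rw [ih, List.prod_cons]; simp only [mul_assoc]
      _ = a * x * a * (l.prod * a) := by simp only [mul_assoc]
      _ = x * (a * l.prod * a) := by rw [hx]; simp only [mul_assoc]
      _ = (x :: l).prod * a := by rw [ih, List.prod_cons, mul_assoc]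

theorem List.exists_eq_append_cons_append_cons_of_two_le_count {α : Type*} [DecidableEq α]
    {a : α} {l : List α} (h : 2 ≤ l.count a) : ∃ p m s, l = p ++ a :: m ++ a :: s := by
  obtain ⟨r₁, r₂, rfl, h₁, h₂⟩ :=
    List.cons_sublist_iff.1 (List.duplicate_iff_sublist.1 (List.duplicate_iff_two_le_count.2 h))
  obtain ⟨p, m₁, rfl⟩ := List.append_of_mem h₁
  obtain ⟨m₂, s, rfl⟩ := List.append_of_mem (List.singleton_sublist.1 h₂)
  exact ⟨p, m₁ ++ m₂, s, by simp⟩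

namespace HK

variable {V : Type*} {E : V → V → Prop}

theorem mk_ofList (l : List V) :
    HKmk E (ofList l) = (l.map fun x => HKmk E (of x)).prod := by
  induction l with
  | nil => exact map_one _
  | cons x l ih => rw [ofList_cons, map_mul, ih, List.map_cons, List.prod_cons]

theorem mk_eq_mk_of_hkRel {u v : FreeMonoid V} (h : HKRel E u v) : HKmk E u = HKmk E v :=
  (HKCon E).eq.2 (ConGen.Rel.of _ _ h)

theorem isIdempotentElem_mk_of (x : V) : IsIdempotentElem (HKmk E (of x)) := by
  simpa [IsIdempotentElem] using mk_eq_mk_of_hkRel (E := E) (Or.inl ⟨x, rfl, rfl⟩)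

theorem commute_mk_of {x y : V} (hxy : x ≠ y) (h : ¬ E x y) (h' : ¬ E y x) :
    Commute (HKmk E (of x)) (HKmk E (of y)) := by
  simpa [Commute, SemiconjBy] using
    mk_eq_mk_of_hkRel (E := E) (Or.inr (Or.inl ⟨x, y, hxy, h, h', rfl, rfl⟩))

theorem mk_of_mul_mk_of_mul_mk_of_eq_left {x y : V} (h : E x y) (h' : ¬ E y x) :
    HKmk E (of x) * HKmk E (of y) * HKmk E (of x) = HKmk E (of x) * HKmk E (of y) := by
  simpa using
    mk_eq_mk_of_hkRel (E := E) (Or.inr (Or.inr (Or.inr (Or.inl ⟨x, y, h, h', rfl, rfl⟩))))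

theorem mk_of_mul_mk_of_mul_mk_of_eq_right {x y : V} (h : E x y) (h' : ¬ E y x) :
    HKmk E (of y) * HKmk E (of x) * HKmk E (of y) = HKmk E (of x) * HKmk E (of y) := by
  rw [← mk_of_mul_mk_of_mul_mk_of_eq_left h h']
  simpa using
    (mk_eq_mk_of_hkRel (E := E) (Or.inr (Or.inr (Or.inl ⟨x, y, h, h', rfl, rfl⟩)))).symm

theorem mk_sandwich_of_source {a : V} (ha : ∀ z, ¬ E z a) (x : V) :
    HKmk E (of a) * HKmk E (of x) * HKmk E (of a) = HKmk E (of a) * HKmk E (of x) := by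
  by_cases hxa : x = a
  · rw [hxa, (isIdempotentElem_mk_of a).eq, (isIdempotentElem_mk_of a).eq]
  by_cases hE : E a x
  · exact mk_of_mul_mk_of_mul_mk_of_eq_left hE (ha x)
  · rw [(commute_mk_of (Ne.symm hxa) hE (ha x)).eq, mul_assoc, (isIdempotentElem_mk_of a).eq]

theorem mk_sandwich_of_sink {a : V} (ha : ∀ z, ¬ E a z) (x : V) :
    HKmk E (of a) * HKmk E (of x) * HKmk E (of a) = HKmk E (of x) * HKmk E (of a) := by
  by_cases hxa : x = a
  · rw [hxa, (isIdempotentElem_mk_of a).eq, (isIdempotentElem_mk_of a).eq]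
  by_cases hE : E x a
  · exact mk_of_mul_mk_of_mul_mk_of_eq_right hE (ha x)
  · rw [(commute_mk_of (Ne.symm hxa) (ha x) hE).eq, mul_assoc, (isIdempotentElem_mk_of a).eq]

theorem mk_of_mul_mul_of_of_source {a : V} (ha : ∀ z, ¬ E z a) (u : List V) :
    HKmk E (of a * ofList u * of a) = HKmk E (of a * ofList u) := by
  simpa [mk_ofList] using (isIdempotentElem_mk_of a).mul_prod_mul_eq_mul_prod
    (u.map fun x => HKmk E (of x)) (by simpa using fun x _ => mk_sandwich_of_source ha x)

theorem mk_of_mul_mul_of_of_sink {a : V} (ha : ∀ z, ¬ E a z) (u : List V) :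
    HKmk E (of a * ofList u * of a) = HKmk E (ofList u * of a) := by
  simpa [mk_ofList] using (isIdempotentElem_mk_of a).mul_prod_mul_eq_prod_mul
    (u.map fun x => HKmk E (of x)) (by simpa using fun x _ => mk_sandwich_of_sink ha x)

theorem exists_shorter_sublist [DecidableEq V] {a : V}
    (ha : (∀ z, ¬ E z a) ∨ (∀ z, ¬ E a z)) {l : List V} (h : 2 ≤ l.count a) :
    ∃ l' : List V, l'.Sublist l ∧ l'.length < l.length ∧
      HKmk E (ofList l') = HKmk E (ofList l) := by
  obtain ⟨p, m, s, rfl⟩ := List.exists_eq_append_cons_append_cons_of_two_le_count h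
  have hsplit : HKmk E (ofList (p ++ a :: m ++ a :: s)) =
      HKmk E (ofList p) * HKmk E (of a * ofList m * of a) * HKmk E (ofList s) := by
    simp [ofList_append, ofList_cons, mul_assoc]
  rcases ha with hsource | hsink
  · refine ⟨p ++ a :: m ++ s, (List.sublist_cons_self a s).append_left _, by simp, ?_⟩
    rw [hsplit, mk_of_mul_mul_of_of_source hsource]
    simp [ofList_append, ofList_cons, mul_assoc]
  · refine ⟨p ++ m ++ a :: s, ?_, by simp, ?_⟩
    · simp
    · rw [hsplit, mk_of_mul_mul_of_of_sink hsink]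
      simp [ofList_append, ofList_cons, mul_assoc]

theorem exists_sublist_count_le_one [DecidableEq V] {A : Set V}
    (hA : ∀ a ∈ A, (∀ z, ¬ E z a) ∨ (∀ z, ¬ E a z)) (l : List V) :
    ∃ l' : List V, l'.Sublist l ∧ HKmk E (ofList l') = HKmk E (ofList l) ∧
      ∀ a ∈ A, l'.count a ≤ 1 := by
  by_cases hl : ∀ a ∈ A, l.count a ≤ 1
  · exact ⟨l, List.Sublist.refl l, rfl, hl⟩
  push Not at hl
  obtain ⟨a, haA, ha⟩ := hl
  obtain ⟨l₁, hsub, hlen, heq⟩ := exists_shorter_sublist (hA a haA) ha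
  obtain ⟨l', hsub', heq', hl'⟩ := exists_sublist_count_le_one hA l₁
  exact ⟨l', hsub'.trans hsub, heq'.trans heq, hl'⟩
termination_by l.length

end HK

theorem hk_multiplicity_free_subword_general {V : Type*} [DecidableEq V] (E : V → V → Prop)
    (A : Set V) (hA : ∀ a ∈ A, (∀ z, ¬ E z a) ∨ (∀ z, ¬ E a z))
    (w : FreeMonoid V) :
    ∃ w' : FreeMonoid V, (FreeMonoid.toList w').Sublist (FreeMonoid.toList w) ∧
      HKmk E w' = HKmk E w ∧
      ∀ a ∈ A, (FreeMonoid.toList w').count a ≤ 1 := by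
  obtain ⟨l', hsub, heq, hcount⟩ := HK.exists_sublist_count_le_one hA (toList w)
  exact ⟨ofList l', hsub, heq, hcount⟩

/-- For a set `A` of vertices each of which is a source or a sink, every word `w` is
equivalent in the Hecke-Kiselman monoid to a subword of `w` in which every vertex of `A`
occurs at most once. -/
theorem hk_multiplicity_free_subword {V : Type*} [DecidableEq V] (E : V → V → Prop)
    (hbidir : ∀ x y, ¬ (E x y ∧ E y x)) (hloop : ∀ x, ¬ E x x)
    (A : Set V) (hA : ∀ a ∈ A, (∀ z, ¬ E z a) ∨ (∀ z, ¬ E a z))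
    (w : FreeMonoid V) :
    ∃ w' : FreeMonoid V, (FreeMonoid.toList w').Sublist (FreeMonoid.toList w) ∧
      HKmk E w' = HKmk E w ∧
      ∀ a ∈ A, (FreeMonoid.toList w').count a ≤ 1 :=
  hk_multiplicity_free_subword_general E A hA w
end

section
/- Let Γ be a simple directed graph with at most one directed edge between any pair of distinct vertices, and let w be a word over V(Γ) whose content is the vertex set of a full subgraph Γ' containing an oriented cycle. Then the powers [w]^k, k ∈ ℕ, are pairwise distinct elements of HK_Γ; in particular HK_Γ is infinite. -/
/-!
Running around the oriented cycle backwards gives a sequence `c : ℕ → V` with an edge from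
`c (m + 1)` to `c m` for every `m`. Let each vertex `v` act on `ℕ` by moving `m` to `m + 1` when
`c m = v` and fixing it otherwise. Since no two vertices are joined in both directions, these
maps satisfy the Hecke-Kiselman relations, so `HK E` acts on `ℕ`. Every `c m` occurs in `w`,
hence `[w]` moves every point strictly up, and its powers are pairwise distinct.
-/

theorem Relation.TransGen.exists_descending_chain {α : Type*} {r : α → α → Prop} {a : α}
    (h : Relation.TransGen r a a) : ∃ f : ℕ → α, ∀ n, r (f (n + 1)) (f n) := by
  have : ¬ WellFounded r := fun hwf => hwf.transGen.irrefl.irrefl a h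
  simpa [wellFounded_iff_isEmpty_descending_chain] using this

theorem Function.End.mul_apply {α : Type*} (f g : Function.End α) (a : α) :
    (f * g) a = f (g a) := rfl

theorem Function.End.strictMono_pow_apply {α : Type*} [Preorder α] {f : Function.End α}
    (hf : ∀ a, a < f a) (a : α) : StrictMono fun k : ℕ => (f ^ k) a :=
  strictMono_nat_of_lt_succ fun k => by
    simpa only [pow_succ', Function.End.mul_apply] using hf ((f ^ k) a)

section WalkShift

variable {V : Type*}

open Classical in
noncomputable def walkShift (c : ℕ → V) (v : V) : Function.End ℕ :=
  fun m => if c m = v then m + 1 else m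

variable {E : V → V → Prop} {c : ℕ → V}

theorem le_walkShift (v : V) (m : ℕ) : m ≤ walkShift c v m := by
  unfold walkShift
  split_ifs <;> omega

theorem le_lift_walkShift (u : FreeMonoid V) (m : ℕ) :
    m ≤ FreeMonoid.lift (walkShift c) u m := by
  induction u using FreeMonoid.inductionOn' generalizing m with
  | one => exact le_rfl
  | of_mul v u ih =>
    rw [map_mul, FreeMonoid.lift_eval_of, Function.End.mul_apply]
    exact (ih m).trans (le_walkShift v _)

theorem lt_lift_walkShift {u : FreeMonoid V} {m : ℕ} (hm : c m ∈ u.toList) :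
    m < FreeMonoid.lift (walkShift c) u m := by
  induction u using FreeMonoid.inductionOn' with
  | one => simp at hm
  | of_mul v u ih =>
    rw [map_mul, FreeMonoid.lift_eval_of, Function.End.mul_apply]
    rcases List.mem_cons.mp hm with rfl | hu
    · rcases (le_lift_walkShift u m).lt_or_eq with hlt | heq
      · exact hlt.trans_le (le_walkShift _ _)
      · simp [← heq, walkShift]
    · exact (ih hu).trans_le (le_walkShift v _)

theorem walkShift_mul_self (hirr : ∀ x, ¬ E x x) (hc : ∀ m, E (c (m + 1)) (c m)) (x : V) :
    walkShift c x * walkShift c x = walkShift c x := by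
  funext m
  have := hc m
  simp only [Function.End.mul_apply, walkShift]
  split_ifs <;> grind

theorem walkShift_commute (hc : ∀ m, E (c (m + 1)) (c m)) {x y : V} (hxy : ¬ E x y)
    (hyx : ¬ E y x) : Commute (walkShift c x) (walkShift c y) := by
  funext m
  have := hc m
  simp only [Function.End.mul_apply, walkShift]
  split_ifs <;> grind

theorem walkShift_mul_mul_of_adj (hE : ∀ x y, ¬ (E x y ∧ E y x))
    (hc : ∀ m, E (c (m + 1)) (c m)) {x y : V} (hxy : E x y) :
    walkShift c x * walkShift c y * walkShift c x = walkShift c x * walkShift c y := by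
  funext m
  have := hc m
  have := hc (m + 1)
  simp only [Function.End.mul_apply, walkShift]
  split_ifs <;> grind

theorem walkShift_mul_mul_of_adj' (hE : ∀ x y, ¬ (E x y ∧ E y x))
    (hc : ∀ m, E (c (m + 1)) (c m)) {x y : V} (hxy : E x y) :
    walkShift c y * walkShift c x * walkShift c y = walkShift c x * walkShift c y := by
  funext m
  have := hc m
  have := hc (m + 1)
  simp only [Function.End.mul_apply, walkShift]
  split_ifs <;> grind

theorem hkCon_le_ker_lift_walkShift (hE : ∀ x y, ¬ (E x y ∧ E y x))
    (hc : ∀ m, E (c (m + 1)) (c m)) : HKCon E ≤ Con.ker (FreeMonoid.lift (walkShift c)) := by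
  refine Con.conGen_le.mpr fun a b hab => (Con.ker_rel _).mpr ?_
  rcases hab with ⟨x, rfl, rfl⟩ | ⟨x, y, -, hxy, hyx, rfl, rfl⟩ |
    ⟨x, y, hxy, -, rfl, rfl⟩ | ⟨x, y, hxy, -, rfl, rfl⟩ | ⟨x, y, hxy, hyx, -⟩
  · simpa only [map_mul, FreeMonoid.lift_eval_of] using
      walkShift_mul_self (fun x h => hE x x ⟨h, h⟩) hc x
  · simpa only [map_mul, FreeMonoid.lift_eval_of] using (walkShift_commute hc hxy hyx).eq
  · simp only [map_mul, FreeMonoid.lift_eval_of]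
    rw [walkShift_mul_mul_of_adj hE hc hxy, walkShift_mul_mul_of_adj' hE hc hxy]
  · simpa only [map_mul, FreeMonoid.lift_eval_of] using walkShift_mul_mul_of_adj hE hc hxy
  · exact absurd ⟨hxy, hyx⟩ (hE x y)

end WalkShift

theorem hk_cycle_infinite_powers_general {V : Type*} (E : V → V → Prop)
    (hbidir : ∀ x y, ¬ (E x y ∧ E y x))
    (w : FreeMonoid V)
    (hcycle : ∃ x : V, Relation.TransGen
      (fun u v => E u v ∧ u ∈ FreeMonoid.toList w ∧ v ∈ FreeMonoid.toList w) x x) :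
    Function.Injective (fun k : ℕ => (HKmk E w) ^ k) ∧ Infinite (HK E) := by
  obtain ⟨x, hx⟩ := hcycle
  obtain ⟨c, hc⟩ := hx.exists_descending_chain
  have hinj : Function.Injective (fun k : ℕ => (HKmk E w) ^ k) := by
    intro j k hjk
    simp only [← map_pow] at hjk
    have hrel : HKCon E (w ^ j) (w ^ k) := (HKCon E).eq.mp hjk
    have hψ := (Con.ker_rel _).mp (hkCon_le_ker_lift_walkShift hbidir (fun m => (hc m).1) hrel)
    rw [map_pow, map_pow] at hψ
    exact (Function.End.strictMono_pow_apply (fun m => lt_lift_walkShift (hc m).2.2) 0).injective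
      (congrFun hψ 0)
  exact ⟨hinj, Infinite.of_injective _ hinj⟩

/-- If the content of a word `w` (the vertex set of a full subgraph) contains an oriented
cycle, then the powers `[w]^k` are pairwise distinct; in particular the Hecke-Kiselman
monoid is infinite. -/
theorem hk_cycle_infinite_powers {V : Type*} (E : V → V → Prop)
    (hbidir : ∀ x y, ¬ (E x y ∧ E y x)) (hloop : ∀ x, ¬ E x x)
    (w : FreeMonoid V)
    (hcycle : ∃ x : V, Relation.TransGen
      (fun u v => E u v ∧ u ∈ FreeMonoid.toList w ∧ v ∈ FreeMonoid.toList w) x x) :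
    Function.Injective (fun k : ℕ => (HKmk E w) ^ k) ∧ Infinite (HK E) :=
  hk_cycle_infinite_powers_general E hbidir w hcycle
end

section
/- Let Γ be a simple directed graph with at most one directed edge between any pair of vertices, containing no oriented cycles, and let w be a word whose content is all of V(Γ), with |V(Γ)| = n. Then [w]^n is the zero (absorbing) element of HK_Γ. -/
/-!
Say that `m` absorbs the vertex `v` if `m * t * v = m * t` for every `t`. If `m` absorbs every
in-neighbour of `v`, then `m * p * v` absorbs `v`: a second `v` can be moved leftwards past any
letter `z` until it meets the first one. Since `[w]` contains every vertex, it follows by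
induction that `[w] ^ (k + 1)` absorbs every vertex with at most `k` ancestors, and in an acyclic
graph every vertex has fewer than `n` ancestors; hence `[w] ^ n * s = [w] ^ n`. The identity
`s * [w] ^ n = [w] ^ n` is the same statement in the opposite monoid, whose generators satisfy
the relations of the reversed graph.
-/

open FreeMonoid MulOpposite Relation

structure SatisfiesHKRelations {V M : Type*} [Monoid M] (E : V → V → Prop) (g : V → M) :
    Prop where
  idem : ∀ x, g x * g x = g x
  comm : ∀ x y, x ≠ y → ¬ E x y → ¬ E y x → g x * g y = g y * g x
  xyx_eq : ∀ x y, E x y → ¬ E y x → g x * g y * g x = g x * g y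
  yxy_eq : ∀ x y, E x y → ¬ E y x → g y * g x * g y = g x * g y

def ancestors {V : Type*} (E : V → V → Prop) (v : V) : Set V := {z | TransGen E z v}

section Ancestors

variable {V : Type*} {E : V → V → Prop}

lemma ancestors_ssubset_of_edge (hacyclic : ∀ x : V, ¬ TransGen E x x) {z v : V} (h : E z v) :
    ancestors E z ⊂ ancestors E v :=
  ⟨fun _ hx => hx.tail h, fun hsub => hacyclic z (hsub (TransGen.single h))⟩

lemma ncard_ancestors_lt_card [Finite V] (hacyclic : ∀ x : V, ¬ TransGen E x x) (v : V) :
    (ancestors E v).ncard < Nat.card V :=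
  Set.ncard_lt_card fun h => hacyclic v (h ▸ Set.mem_univ v : v ∈ ancestors E v)

end Ancestors

section Absorption

variable {V M : Type*} [Monoid M] {E : V → V → Prop} {g : V → M}

def AbsorbsRight (g : V → M) (m : M) (v : V) : Prop := ∀ t, m * t * g v = m * t

lemma AbsorbsRight.mul {m : M} {v : V} (h : AbsorbsRight g m v) (a : M) :
    AbsorbsRight g (m * a) v :=
  fun t => by simpa only [mul_assoc] using h (a * t)

namespace SatisfiesHKRelations

variable (hg : SatisfiesHKRelations E g) (hgen : Submonoid.closure (Set.range g) = ⊤)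
include hg hgen

/-- The second `g v` moves leftwards past each letter `z`: `z` is absorbed
by `m` when `z → v`, contracts `v z v = v z` when `v → z`, and commutes with `v` otherwise. -/
lemma absorbsRight_mul_mul {m : M} {v : V} (hin : ∀ z, E z v → AbsorbsRight g m z) (p : M) :
    AbsorbsRight g (m * p * g v) v := by
  intro q
  induction q using Submonoid.induction_of_closure_eq_top_right hgen with
  | one => rw [mul_one, mul_assoc, hg.idem]
  | mul_right q z' hz' ih =>
    obtain ⟨z, rfl⟩ := hz'
    rw [← mul_assoc]
    set r := m * p * g v * q
    by_cases hzv : z = v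
    · rw [hzv, mul_assoc, hg.idem]
    by_cases hEzv : E z v
    · have hdel : r * g z = r := by
        have := hin z hEzv (p * g v * q)
        simp only [← mul_assoc] at this
        exact this
      rw [hdel, ih]
    by_cases hEvz : E v z
    · calc r * g z * g v = r * g v * g z * g v := by rw [ih]
        _ = r * g v * g z := by
          rw [mul_assoc r, mul_assoc r, hg.xyx_eq v z hEvz hEzv, ← mul_assoc]
        _ = r * g z := by rw [ih]
    · calc r * g z * g v = r * g v * g z := by
            rw [mul_assoc, hg.comm z v hzv hEzv hEvz, ← mul_assoc]
        _ = r * g z := by rw [ih]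

lemma absorbsRight_mul_of_eq {m a p q : M} {v : V} (hin : ∀ z, E z v → AbsorbsRight g m z)
    (ha : a = p * g v * q) : AbsorbsRight g (m * a) v := by
  rw [ha, ← mul_assoc, ← mul_assoc]
  exact (hg.absorbsRight_mul_mul hgen hin p).mul q

variable [Finite V] (hacyclic : ∀ x : V, ¬ TransGen E x x) {a : M}
  (ha : ∀ v, ∃ p q, a = p * g v * q)
include hacyclic ha

lemma pow_absorbsRight (n : ℕ) (v : V) (hv : (ancestors E v).ncard < n) :
    AbsorbsRight g (a ^ n) v := by
  induction n generalizing v with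
  | zero => exact absurd hv (Nat.not_lt_zero _)
  | succ n ih =>
    obtain ⟨p, q, hpq⟩ := ha v
    rw [pow_succ]
    refine hg.absorbsRight_mul_of_eq hgen (fun z hz => ih z ?_) hpq
    exact (Set.ncard_lt_ncard (ancestors_ssubset_of_edge hacyclic hz)).trans_le
      (Nat.lt_succ_iff.1 hv)

lemma pow_card_mul (s : M) : a ^ Nat.card V * s = a ^ Nat.card V := by
  induction s using Submonoid.induction_of_closure_eq_top_right hgen with
  | one => rw [mul_one]
  | mul_right s z hz ih =>
    obtain ⟨v, rfl⟩ := hz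
    rw [← mul_assoc, hg.pow_absorbsRight hgen hacyclic ha _ v
      (ncard_ancestors_lt_card hacyclic v) s, ih]

end SatisfiesHKRelations

end Absorption

section Opposite

variable {V M : Type*} [Monoid M] {E : V → V → Prop} {g : V → M}

lemma SatisfiesHKRelations.mulOpposite (hg : SatisfiesHKRelations E g) :
    SatisfiesHKRelations (flip E) (fun v => op (g v)) where
  idem x := by rw [← op_mul, hg.idem]
  comm x y hxy h₁ h₂ := by rw [← op_mul, ← op_mul, hg.comm y x hxy.symm h₁ h₂]
  xyx_eq x y h h' := by simp only [← op_mul, ← mul_assoc, hg.yxy_eq y x h h']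
  yxy_eq x y h h' := by simp only [← op_mul, ← mul_assoc, hg.xyx_eq y x h h']

lemma closure_range_op_eq_top (hgen : Submonoid.closure (Set.range g) = ⊤) :
    Submonoid.closure (Set.range fun v => op (g v)) = ⊤ := by
  have : Set.range (fun v => op (g v)) = unop ⁻¹' Set.range g := by
    ext x; exact exists_congr fun v => by rw [← unop_inj, unop_op]
  rw [this, ← Submonoid.op_closure, hgen, Submonoid.op_top]

lemma SatisfiesHKRelations.mul_pow_card [Finite V] (hg : SatisfiesHKRelations E g)
    (hgen : Submonoid.closure (Set.range g) = ⊤) (hacyclic : ∀ x : V, ¬ TransGen E x x)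
    {a : M} (ha : ∀ v, ∃ p q, a = p * g v * q) (s : M) :
    s * a ^ Nat.card V = a ^ Nat.card V := by
  have hacyclic' : ∀ x : V, ¬ TransGen (flip E) x x := fun x h =>
    hacyclic x (transGen_swap.1 h)
  have ha' : ∀ v, ∃ p q, op a = p * op (g v) * q := fun v => by
    obtain ⟨p, q, hpq⟩ := ha v
    exact ⟨op q, op p, by rw [hpq, op_mul, op_mul, mul_assoc]⟩
  simpa only [← op_pow, ← op_mul, op_inj] using
    hg.mulOpposite.pow_card_mul (closure_range_op_eq_top hgen) hacyclic' ha' (op s)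

end Opposite

section HeckeKiselman

variable {V : Type*} (E : V → V → Prop)

lemma HKmk_eq_of_rel {a b : FreeMonoid V} (h : HKRel E a b) : HKmk E a = HKmk E b :=
  (HKCon E).eq.2 (ConGen.Rel.of a b h)

lemma satisfiesHKRelations_HKmk : SatisfiesHKRelations E (fun v => HKmk E (of v)) where
  idem x := by
    simpa only [map_mul] using HKmk_eq_of_rel E (Or.inl ⟨x, rfl, rfl⟩)
  comm x y hxy h₁ h₂ := by
    simpa only [map_mul] using
      HKmk_eq_of_rel E (Or.inr (Or.inl ⟨x, y, hxy, h₁, h₂, rfl, rfl⟩))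
  xyx_eq x y h h' := by
    simpa only [map_mul] using
      HKmk_eq_of_rel E (Or.inr (Or.inr (Or.inr (Or.inl ⟨x, y, h, h', rfl, rfl⟩))))
  yxy_eq x y h h' := by
    simpa only [map_mul] using
      (HKmk_eq_of_rel E (Or.inr (Or.inr (Or.inl ⟨x, y, h, h', rfl, rfl⟩)))).symm.trans
        (HKmk_eq_of_rel E (Or.inr (Or.inr (Or.inr (Or.inl ⟨x, y, h, h', rfl, rfl⟩)))))

lemma closure_range_HKmk_of_eq_top :
    Submonoid.closure (Set.range fun v => HKmk E (of v)) = ⊤ := by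
  have hlift : (lift fun v => HKmk E (of v)) = HKmk E := lift_restrict (HKmk E)
  rw [← FreeMonoid.mrange_lift, hlift]
  exact MonoidHom.mrange_eq_top_of_surjective _ (HKCon E).mk'_surjective

lemma exists_HKmk_eq_mul_mul_of_mem {w : FreeMonoid V} {v : V} (hv : v ∈ toList w) :
    ∃ p q, HKmk E w = p * HKmk E (of v) * q := by
  obtain ⟨l₁, l₂, hw⟩ := List.append_of_mem hv
  refine ⟨HKmk E (ofList l₁), HKmk E (ofList l₂), ?_⟩
  rw [← map_mul, ← map_mul, ← ofList_toList w, hw, ← ofList_singleton, ← ofList_append,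
    ← ofList_append, List.append_assoc, List.singleton_append]

end HeckeKiselman

theorem hk_acyclic_power_is_zero_general {V : Type*} [Fintype V] (E : V → V → Prop)
    (hacyclic : ∀ x : V, ¬ Relation.TransGen E x x)
    (w : FreeMonoid V) (hw : {x | x ∈ FreeMonoid.toList w} = Set.univ) :
    ∀ s : HK E, (HKmk E w) ^ (Fintype.card V) * s = (HKmk E w) ^ (Fintype.card V) ∧
      s * (HKmk E w) ^ (Fintype.card V) = (HKmk E w) ^ (Fintype.card V) := by
  have hdiv : ∀ v, ∃ p q, HKmk E w = p * HKmk E (of v) * q := fun v =>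
    exists_HKmk_eq_mul_mul_of_mem E (hw ▸ Set.mem_univ v : v ∈ {x | x ∈ toList w})
  have hg := satisfiesHKRelations_HKmk E
  have hgen := closure_range_HKmk_of_eq_top E
  intro s
  rw [← Nat.card_eq_fintype_card]
  exact ⟨hg.pow_card_mul hgen hacyclic hdiv s, hg.mul_pow_card hgen hacyclic hdiv s⟩

/-- If a finite graph with at most one directed edge between any pair of vertices contains
no oriented cycles and `w` is a word of full content, then `[w]^n`, where `n` is the number
of vertices, is the zero (absorbing) element of the Hecke-Kiselman monoid. -/
theorem hk_acyclic_power_is_zero {V : Type*} [Fintype V] (E : V → V → Prop)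
    (hbidir : ∀ x y, ¬ (E x y ∧ E y x)) (hloop : ∀ x, ¬ E x x)
    (hacyclic : ∀ x : V, ¬ Relation.TransGen E x x)
    (w : FreeMonoid V) (hw : {x | x ∈ FreeMonoid.toList w} = Set.univ) :
    ∀ s : HK E, (HKmk E w) ^ (Fintype.card V) * s = (HKmk E w) ^ (Fintype.card V) ∧
      s * (HKmk E w) ^ (Fintype.card V) = (HKmk E w) ^ (Fintype.card V) :=
  hk_acyclic_power_is_zero_general E hacyclic w hw
end

section
/- Let Γ be a simple directed graph, a a vertex, and S_a the full subgraph on vertices v from which there is a directed path to a (the source graph of a). Let p_a : HK_Γ → HK_{S_a} be the canonical projection and R_f the weighted linear representation on the free module with basis V(Γ). Then for every element [w] of HK_Γ, R_f([w])(a) = R_f(p_a([w]))(a). -/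
open scoped Classical

section Aux

variable {V : Type*} [Fintype V] {R : Type*} [CommRing R]
  (E : V → V → Prop) (f : V → V → R) (a : V)

lemma theta_eq_id_of_notMem (x : V) (u : V →₀ R) (hx : x ∉ u.support) :
    theta E f x u = u := by
  rw [theta, Finsupp.lsum_apply]
  have : (u.sum fun y r => (if y = x then ∑ z : V, if E z x then f z x • (Finsupp.lsingle z : R →ₗ[R] V →₀ R) else 0
      else Finsupp.lsingle y) r) = u.sum fun y r => Finsupp.single y r := by
    apply Finsupp.sum_congr
    intro y hy
    have hyx : y ≠ x := fun h => hx (h ▸ hy)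
    simp [hyx]
  rw [this, Finsupp.sum_single]

lemma theta_support (x : V) (hx : Relation.ReflTransGen E x a) (u : V →₀ R)
    (hu : ∀ v ∈ u.support, Relation.ReflTransGen E v a) :
    ∀ v ∈ (theta E f x u).support, Relation.ReflTransGen E v a := by
  intro v hv
  rw [theta, Finsupp.lsum_apply] at hv
  have := Finsupp.support_sum hv
  simp only [Finset.mem_biUnion] at this
  obtain ⟨y, hy, hvy⟩ := this
  by_cases hyx : y = x
  · subst hyx
    rw [if_pos rfl, LinearMap.sum_apply] at hvy
    obtain ⟨z, -, hz⟩ := Finsupp.mem_support_finset_sum v hvy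
    by_cases hE : E z y
    · simp only [if_pos hE] at hz
      have hvz : v = z := by
        have := Finsupp.support_single_subset (Finset.mem_of_subset (by
          simpa using Finsupp.support_smul (b := f z y) (g := Finsupp.single z (u y))) hz)
        simpa using this
      subst hvz
      exact Relation.ReflTransGen.head hE hx
    · simp [hE] at hz
  · simp only [if_neg hyx, Finsupp.lsingle_apply] at hvy
    have : v = y := by simpa using Finsupp.support_single_subset hvy
    exact this ▸ hu y hy

lemma key (l : List V) (u : V →₀ R) (hu : ∀ v ∈ u.support, Relation.ReflTransGen E v a) :
    Rword E f (FreeMonoid.ofList l) u =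
      Rword E f (FreeMonoid.ofList (l.filter fun v => decide (Relation.ReflTransGen E v a))) u ∧
    ∀ v ∈ (Rword E f (FreeMonoid.ofList l) u).support, Relation.ReflTransGen E v a := by
  induction l with
  | nil => exact ⟨rfl, by simpa using hu⟩
  | cons x t ih =>
    have hcons : FreeMonoid.ofList (x :: t) = FreeMonoid.of x * FreeMonoid.ofList t := rfl
    have happ : Rword E f (FreeMonoid.ofList (x :: t)) u
        = theta E f x (Rword E f (FreeMonoid.ofList t) u) := by
      rw [hcons, map_mul]
      simp [Rword, Module.End.mul_apply]
    by_cases hx : Relation.ReflTransGen E x a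
    · have hfil : (x :: t).filter (fun v => decide (Relation.ReflTransGen E v a))
          = x :: t.filter (fun v => decide (Relation.ReflTransGen E v a)) := by
        simp [List.filter_cons, hx]
      constructor
      · rw [happ, hfil]
        have : Rword E f (FreeMonoid.ofList (x :: t.filter fun v => decide (Relation.ReflTransGen E v a))) u
            = theta E f x (Rword E f (FreeMonoid.ofList (t.filter fun v => decide (Relation.ReflTransGen E v a))) u) := by
          rw [show FreeMonoid.ofList (x :: t.filter fun v => decide (Relation.ReflTransGen E v a))
              = FreeMonoid.of x * FreeMonoid.ofList (t.filter fun v => decide (Relation.ReflTransGen E v a)) from rfl,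
            map_mul]
          simp [Rword, Module.End.mul_apply]
        rw [this, ih.1]
      · rw [happ]
        exact theta_support E f a x hx _ ih.2
    · have hid : theta E f x (Rword E f (FreeMonoid.ofList t) u)
          = Rword E f (FreeMonoid.ofList t) u := by
        apply theta_eq_id_of_notMem
        intro hmem
        exact hx (ih.2 x hmem)
      have hfil : (x :: t).filter (fun v => decide (Relation.ReflTransGen E v a))
          = t.filter (fun v => decide (Relation.ReflTransGen E v a)) := by
        simp [List.filter_cons, hx]
      exact ⟨by rw [happ, hid, hfil]; exact ih.1, by rw [happ, hid]; exact ih.2⟩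

end Aux

/-- The source-graph lemma: for a vertex `a`, deleting from a word all letters `v` from
which there is no directed path to `a` (i.e. projecting onto the source graph `S_a`)
does not change the action of the weighted representation on the basis vector `a`. -/
theorem hk_source_graph_projection {V : Type*} [Fintype V]
    {R : Type*} [CommRing R] [IsDomain R]
    (E : V → V → Prop) (f : V → V → R) (a : V) (w : FreeMonoid V) :
    Rword E f w (Finsupp.single a (1 : R)) =
      Rword E f (FreeMonoid.ofList
        ((FreeMonoid.toList w).filter (fun v => decide (Relation.ReflTransGen E v a))))
        (Finsupp.single a (1 : R)) := by
  have hu : ∀ v ∈ (Finsupp.single a (1 : R)).support, Relation.ReflTransGen E v a := by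
    intro v hv
    have : v = a := by simpa using Finsupp.support_single_subset hv
    exact this ▸ Relation.ReflTransGen.refl
  have := (key E f a (FreeMonoid.toList w) (Finsupp.single a 1) hu).1
  simpa [FreeMonoid.ofList_toList] using this
end

section
/- Let Γ be a union of two full subgraphs Γ₁ and Γ₂ sharing no edges, with V(Γ₁) ∩ V(Γ₂) = {a} where a is a source or a sink of Γ. Then the map p = (p₁, p₂) : HK_Γ → HK_{Γ₁} × HK_{Γ₂}, where p_i are the canonical projections, is injective. -/
open scoped Classical in
/-- The projection of a word onto the letters lying in a subset `S` of vertices,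
viewed as a word over the subgraph. -/
noncomputable def projWord {V : Type*} (S : Set V) (w : FreeMonoid V) : FreeMonoid S :=
  FreeMonoid.ofList ((FreeMonoid.toList w).filterMap
    (fun x => if h : x ∈ S then some (⟨x, h⟩ : S) else none))

-- list-level congruence
abbrev LK {V : Type*} (E : V → V → Prop) (l m : List V) : Prop :=
  HKCon E (FreeMonoid.ofList l) (FreeMonoid.ofList m)

namespace LK
variable {V : Type*} {E : V → V → Prop} {l m n l₁ l₂ m₁ m₂ : List V}

theorem refl (l : List V) : LK E l l := (HKCon E).refl _
theorem symm (h : LK E l m) : LK E m l := (HKCon E).symm h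
theorem trans (h : LK E l m) (h' : LK E m n) : LK E l n := (HKCon E).trans h h'
theorem append (h₁ : LK E l₁ m₁) (h₂ : LK E l₂ m₂) : LK E (l₁ ++ l₂) (m₁ ++ m₂) :=
  (HKCon E).mul h₁ h₂
theorem ctx (c d : List V) (h : LK E l m) : LK E (c ++ l ++ d) (c ++ m ++ d) :=
  append (append (refl c) h) (refl d)
theorem cons (x : V) (h : LK E l m) : LK E (x :: l) (x :: m) :=
  append (refl [x]) h

theorem of_rel (h : HKRel E (FreeMonoid.ofList l) (FreeMonoid.ofList m)) : LK E l m :=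
  ConGen.Rel.of _ _ h

theorem idem (x : V) : LK E [x, x] [x] :=
  of_rel (Or.inl ⟨x, rfl, rfl⟩)
theorem comm {x y : V} (hne : x ≠ y) (h1 : ¬ E x y) (h2 : ¬ E y x) : LK E [x, y] [y, x] :=
  of_rel (Or.inr (Or.inl ⟨x, y, hne, h1, h2, rfl, rfl⟩))
theorem braid {x y : V} (h1 : E x y) (h2 : ¬ E y x) : LK E [x, y, x] [y, x, y] :=
  of_rel (Or.inr (Or.inr (Or.inl ⟨x, y, h1, h2, rfl, rfl⟩)))
theorem absorb {x y : V} (h1 : E x y) (h2 : ¬ E y x) : LK E [x, y, x] [x, y] :=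
  of_rel (Or.inr (Or.inr (Or.inr (Or.inl ⟨x, y, h1, h2, rfl, rfl⟩))))

/-- `a y ≡ y a y` when `E a y` and `¬ E y a`. -/
theorem absorb' {x y : V} (h1 : E x y) (h2 : ¬ E y x) : LK E [x, y] [y, x, y] :=
  (absorb h1 h2).symm.trans (braid h1 h2)

end LK

namespace LK
variable {V : Type*} {E : V → V → Prop} {l m : List V}

/-- Content invariance. -/
theorem mem_iff' {u v : FreeMonoid V} (h : HKCon E u v) :
    ∀ x, x ∈ FreeMonoid.toList u ↔ x ∈ FreeMonoid.toList v := by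
  induction h with
  | of u v h =>
      rcases h with ⟨x, rfl, rfl⟩ | ⟨x, y, _, _, _, rfl, rfl⟩ | ⟨x, y, _, _, rfl, rfl⟩ |
        ⟨x, y, _, _, rfl, rfl⟩ | ⟨x, y, _, _, rfl, rfl⟩ <;>
      · intro z
        simp only [FreeMonoid.toList_mul, FreeMonoid.toList_of, List.mem_append,
          List.mem_singleton]
        tauto
  | refl => exact fun _ => Iff.rfl
  | symm _ ih => exact fun x => (ih x).symm
  | trans _ _ ih1 ih2 => exact fun x => (ih1 x).trans (ih2 x)
  | mul _ _ ih1 ih2 =>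
      intro x
      simp only [FreeMonoid.toList_mul, List.mem_append]
      rw [ih1 x, ih2 x]

theorem mem_iff (h : LK E l m) : ∀ x, x ∈ l ↔ x ∈ m := mem_iff' h

/-- Lifting a congruence on the subgraph on `S` to the big graph. -/
theorem lift {S : Set V} {u v : FreeMonoid S}
    (h : HKCon (fun x y : S => E x y) u v) :
    LK E ((FreeMonoid.toList u).map Subtype.val) ((FreeMonoid.toList v).map Subtype.val) := by
  induction h with
  | of u v h =>
      apply of_rel
      rcases h with ⟨x, rfl, rfl⟩ | ⟨x, y, hne, h1, h2, rfl, rfl⟩ | ⟨x, y, h1, h2, rfl, rfl⟩ |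
        ⟨x, y, h1, h2, rfl, rfl⟩ | ⟨x, y, h1, h2, rfl, rfl⟩
      · exact Or.inl ⟨x, rfl, rfl⟩
      · exact Or.inr (Or.inl ⟨x, y, fun hc => hne (Subtype.coe_injective hc), h1, h2, rfl, rfl⟩)
      · exact Or.inr (Or.inr (Or.inl ⟨x, y, h1, h2, rfl, rfl⟩))
      · exact Or.inr (Or.inr (Or.inr (Or.inl ⟨x, y, h1, h2, rfl, rfl⟩)))
      · exact Or.inr (Or.inr (Or.inr (Or.inr ⟨x, y, h1, h2, rfl, rfl⟩)))
  | refl => exact refl _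
  | symm _ ih => exact ih.symm
  | trans _ _ ih1 ih2 => exact ih1.trans ih2
  | mul _ _ ih1 ih2 =>
      have := ih1.append ih2
      simpa using this

/-- Move a letter commuting with everything in `m` from right to left. -/
theorem move_left {x : V} : ∀ {m : List V}, (∀ y ∈ m, LK E [x, y] [y, x]) →
    LK E (m ++ [x]) (x :: m) := by
  intro m
  induction m with
  | nil => exact fun _ => refl _
  | cons y t ih =>
      intro h
      have h1 : LK E (y :: (t ++ [x])) (y :: x :: t) := cons y (ih fun z hz => h z (by simp [hz]))
      have h2 : LK E ([y, x] ++ t) ([x, y] ++ t) :=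
        (h y (by simp)).symm.append (refl t)
      exact h1.trans h2

/-- Sorting an `a`-free word into its `p`-part and its non-`p`-part. -/
theorem sort (p : V → Bool) : ∀ (l : List V),
    (∀ x ∈ l, ∀ y ∈ l, p x = true → p y = false → LK E [x, y] [y, x] ∧ LK E [y, x] [x, y]) →
    LK E l (l.filter p ++ l.filter (fun x => ! p x)) := by
  intro l
  induction l with
  | nil => exact fun _ => refl _
  | cons x t ih =>
      intro h
      have iht := ih fun z hz w hw => h z (by simp [hz]) w (by simp [hw])
      by_cases hp : p x = true
      · have : LK E (x :: t) (x :: (t.filter p ++ t.filter (fun x => ! p x))) := cons x iht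
        simpa [List.filter, hp] using this
      · have hp' : p x = false := by simpa using hp
        have h1 : LK E (x :: t) (x :: (t.filter p ++ t.filter (fun x => ! p x))) := cons x iht
        have h2 : LK E (x :: t.filter p) (t.filter p ++ [x]) := by
          apply (move_left ?_).symm
          intro y hy
          have hyt : y ∈ t := List.mem_of_mem_filter hy
          have hpy : p y = true := List.of_mem_filter hy
          exact (h y (by simp [hyt]) x (by simp) hpy hp').2
        have h3 : LK E (x :: t.filter p ++ t.filter (fun x => ! p x))
            ((t.filter p ++ [x]) ++ t.filter (fun x => ! p x)) :=
          h2.append (refl _)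
        have := h1.trans (by simpa using h3)
        simpa [List.filter, hp'] using this

end LK

namespace LK
variable {V : Type*} {E : V → V → Prop} {a : V}

/-- If `a` is a source, `a u a ≡ a u`. -/
theorem aua (hsrc : ∀ z, ¬ E z a) : ∀ u : List V, LK E (a :: (u ++ [a])) (a :: u) := by
  intro u
  induction u with
  | nil => exact idem a
  | cons y t ih =>
      by_cases hy : a = y
      · subst hy
        have h1 : LK E ([a, a] ++ (t ++ [a])) ([a] ++ (t ++ [a])) := (idem a).append (refl _)
        have h2 : LK E ([a] ++ t) ([a, a] ++ t) := (idem a).symm.append (refl t)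
        exact (h1.trans ih).trans h2
      · by_cases hE : E a y
        · have h0 : LK E ([a, y] ++ (t ++ [a])) ([a, y, a] ++ (t ++ [a])) :=
            ((absorb hE (hsrc y)).symm).append (refl _)
          have h1 : LK E ([a, y] ++ (a :: (t ++ [a]))) ([a, y] ++ (a :: t)) :=
            (refl [a, y]).append ih
          have h2 : LK E ([a, y, a] ++ t) ([a, y] ++ t) := (absorb hE (hsrc y)).append (refl t)
          exact (h0.trans h1).trans h2
        · have h0 : LK E ([a, y] ++ (t ++ [a])) ([y, a] ++ (t ++ [a])) :=
            (comm hy hE (hsrc y)).append (refl _)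
          have h1 : LK E ([y] ++ (a :: (t ++ [a]))) ([y] ++ (a :: t)) := (refl [y]).append ih
          have h2 : LK E ([y, a] ++ t) ([a, y] ++ t) :=
            ((comm hy hE (hsrc y)).symm).append (refl t)
          exact (h0.trans h1).trans h2

/-- Cleaning all `a`s out of the tail, after a leading `a`. -/
theorem tail_clean (hsrc : ∀ z, ¬ E z a) (pa : V → Bool) (hpa : ∀ x, pa x = true ↔ x ≠ a) :
    ∀ (r s : List V), LK E (a :: (s ++ r)) (a :: (s ++ r.filter pa)) := by
  have hpaa : pa a = false := by
    rw [← Bool.not_eq_true, hpa]; simp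
  intro r
  induction r with
  | nil => exact fun s => refl _
  | cons x r' ih =>
      intro s
      by_cases hx : a = x
      · subst hx
        have h1 : LK E (a :: (s ++ [a]) ++ r') (a :: s ++ r') := (aua hsrc s).append (refl r')
        have h1' : LK E (a :: (s ++ (a :: r'))) (a :: (s ++ r')) := by
          simpa [List.append_assoc] using h1
        rw [List.filter_cons_of_neg (by simp [hpaa])]
        exact h1'.trans (ih s)
      · have hpx : pa x = true := (hpa x).2 (Ne.symm hx)
        have h1 := ih (s ++ [x])
        rw [List.filter_cons_of_pos hpx]
        simpa [List.append_assoc] using h1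

/-- Splitting a word at the first occurrence of `a`. -/
theorem first_a (pa : V → Bool) (hpa : ∀ x, pa x = true ↔ x ≠ a) :
    ∀ {l : List V}, a ∈ l →
      l = l.takeWhile pa ++ a :: ((l.dropWhile pa).tail) ∧
      l.dropWhile pa = a :: ((l.dropWhile pa).tail) := by
  have hpaa : pa a = false := by rw [← Bool.not_eq_true, hpa]; simp
  intro l
  induction l with
  | nil => simp
  | cons x l' ih =>
      intro hal
      by_cases hx : a = x
      · subst hx
        rw [List.takeWhile_cons_of_neg (by simp [hpaa]), List.dropWhile_cons_of_neg (by simp [hpaa])]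
        simp
      · have hpx : pa x = true := (hpa x).2 (Ne.symm hx)
        have hal' : a ∈ l' := by
          rcases List.mem_cons.1 hal with h | h
          · exact absurd h.symm (Ne.symm hx)
          · exact h
        obtain ⟨h1, h2⟩ := ih hal'
        rw [List.takeWhile_cons_of_pos hpx, List.dropWhile_cons_of_pos hpx]
        exact ⟨by rw [List.cons_append]; rw [← h1], h2⟩

/-- Normal form : word ≡ (prefix before first `a`) ++ [a] ++ (rest with `a`s removed). -/
theorem decomp (hsrc : ∀ z, ¬ E z a) (pa : V → Bool) (hpa : ∀ x, pa x = true ↔ x ≠ a)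
    {l : List V} (hal : a ∈ l) :
    LK E l (l.takeWhile pa ++ a :: (l.dropWhile pa).filter pa) := by
  have hpaa : pa a = false := by rw [← Bool.not_eq_true, hpa]; simp
  obtain ⟨h1, h2⟩ := first_a pa hpa hal
  have h3 : LK E (a :: ((l.dropWhile pa).tail))
      (a :: ((l.dropWhile pa).tail).filter pa) := by
    simpa using tail_clean hsrc pa hpa ((l.dropWhile pa).tail) []
  have h4 : (l.dropWhile pa).filter pa = ((l.dropWhile pa).tail).filter pa := by
    rw [h2]; simp [hpaa]
  rw [h4]
  have h0 : LK E l (l.takeWhile pa ++ a :: (l.dropWhile pa).tail) := by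
    conv_lhs => rw [h1]
    exact refl _
  have h5 : LK E (l.takeWhile pa ++ (a :: (l.dropWhile pa).tail))
      (l.takeWhile pa ++ (a :: ((l.dropWhile pa).tail).filter pa)) := (refl _).append h3
  exact h0.trans h5
end LK

namespace LK
variable {V : Type*} {E : V → V → Prop} {S₁ S₂ : Set V} {a : V}

theorem of_eq {l m : List V} (h : l = m) : LK E l m := h ▸ refl l

theorem mem_singleton_inter (hinter : S₁ ∩ S₂ = {a}) {x : V} (h1 : x ∈ S₁) (h2 : x ∈ S₂) :
    x = a := by
  have : x ∈ S₁ ∩ S₂ := ⟨h1, h2⟩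
  rw [hinter] at this
  exact this

theorem cross_comm (hinter : S₁ ∩ S₂ = {a})
    (hedges : ∀ x y, E x y → (x ∈ S₁ ∧ y ∈ S₁) ∨ (x ∈ S₂ ∧ y ∈ S₂))
    {x y : V} (hx1 : x ∈ S₁) (hxa : x ≠ a) (hy2 : y ∈ S₂) (hya : y ≠ a) :
    LK E [x, y] [y, x] := by
  have hxy : x ≠ y := fun h => hxa (mem_singleton_inter hinter hx1 (h ▸ hy2))
  have h1 : ¬ E x y := by
    intro h
    rcases hedges x y h with ⟨_, hy1⟩ | ⟨hx2, _⟩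
    · exact hya (mem_singleton_inter hinter hy1 hy2)
    · exact hxa (mem_singleton_inter hinter hx1 hx2)
  have h2 : ¬ E y x := by
    intro h
    rcases hedges y x h with ⟨hy1, _⟩ | ⟨_, hx2⟩
    · exact hya (mem_singleton_inter hinter hy1 hy2)
    · exact hxa (mem_singleton_inter hinter hx1 hx2)
  exact comm hxy h1 h2

/-- Deleting the letter `a` is compatible with the congruence of `Γ₂`,
    when `a` is a source. -/
theorem del (hbidir : ∀ x y, ¬ (E x y ∧ E y x)) (hsrc : ∀ z, ¬ E z a)
    (pa : V → Bool) (hpa : ∀ x, pa x = true ↔ x ≠ a)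
    {v v' : FreeMonoid S₂} (h : HKCon (fun x y : S₂ => E x y) v v') :
    LK E (((FreeMonoid.toList v).map Subtype.val).filter pa)
      (((FreeMonoid.toList v').map Subtype.val).filter pa) := by
  have hpaa : pa a = false := by rw [← Bool.not_eq_true, hpa]; simp
  induction h with
  | of u v h =>
      rcases h with ⟨x, rfl, rfl⟩ | ⟨x, y, hne, h1, h2, rfl, rfl⟩ | ⟨x, y, h1, h2, rfl, rfl⟩ |
        ⟨x, y, h1, h2, rfl, rfl⟩ | ⟨x, y, h1, h2, rfl, rfl⟩
      · -- idempotent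
        by_cases hx : (x : V) = a
        · apply of_eq
          show List.filter pa [(x : V), x] = List.filter pa [(x : V)]
          simp [hx, hpaa]
        · have hpx : pa (x : V) = true := (hpa _).2 hx
          have : LK E [(x : V), x] [(x : V)] := idem _
          show LK E (List.filter pa [(x : V), x]) (List.filter pa [(x : V)])
          simpa [hpx] using this
      · -- commuting
        by_cases hx : (x : V) = a <;> by_cases hy : (y : V) = a
        · apply of_eq; show List.filter pa [(x : V), y] = List.filter pa [(y : V), x]
          simp [hx, hy, hpaa]
        · have hpy : pa (y : V) = true := (hpa _).2 hy
          apply of_eq; show List.filter pa [(x : V), y] = List.filter pa [(y : V), x]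
          simp [hx, hpaa, hpy]
        · have hpx : pa (x : V) = true := (hpa _).2 hx
          apply of_eq; show List.filter pa [(x : V), y] = List.filter pa [(y : V), x]
          simp [hy, hpaa, hpx]
        · have hpx : pa (x : V) = true := (hpa _).2 hx
          have hpy : pa (y : V) = true := (hpa _).2 hy
          have : LK E [(x : V), y] [(y : V), x] :=
            comm (fun hc => hne (Subtype.coe_injective hc)) h1 h2
          show LK E (List.filter pa [(x : V), y]) (List.filter pa [(y : V), x])
          simpa [hpx, hpy] using this
      · -- braid
        have hy : (y : V) ≠ a := fun hc => hsrc x (hc ▸ h1)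
        have hpy : pa (y : V) = true := (hpa _).2 hy
        by_cases hx : (x : V) = a
        · have : LK E [(y : V)] [(y : V), y] := (idem _).symm
          show LK E (List.filter pa [(x : V), y, x]) (List.filter pa [(y : V), x, y])
          simpa [hx, hpaa, hpy] using this
        · have hpx : pa (x : V) = true := (hpa _).2 hx
          have : LK E [(x : V), y, x] [(y : V), x, y] := braid h1 h2
          show LK E (List.filter pa [(x : V), y, x]) (List.filter pa [(y : V), x, y])
          simpa [hpx, hpy] using this
      · -- absorb
        have hy : (y : V) ≠ a := fun hc => hsrc x (hc ▸ h1)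
        have hpy : pa (y : V) = true := (hpa _).2 hy
        by_cases hx : (x : V) = a
        · apply of_eq; show List.filter pa [(x : V), y, x] = List.filter pa [(x : V), y]
          simp [hx, hpaa, hpy]
        · have hpx : pa (x : V) = true := (hpa _).2 hx
          have : LK E [(x : V), y, x] [(x : V), y] := absorb h1 h2
          show LK E (List.filter pa [(x : V), y, x]) (List.filter pa [(x : V), y])
          simpa [hpx, hpy] using this
      · exact absurd ⟨h1, h2⟩ (hbidir _ _)
  | refl => exact refl _
  | symm _ ih => exact ih.symm
  | trans _ _ ih1 ih2 => exact ih1.trans ih2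
  | mul _ _ ih1 ih2 =>
      have := ih1.append ih2
      simpa [List.filter_append] using this

end LK

namespace LK
variable {V : Type*} {E : V → V → Prop} {S₁ S₂ : Set V} {a : V}

section Shift

variable (hinter : S₁ ∩ S₂ = {a})
  (hedges : ∀ x y, E x y → (x ∈ S₁ ∧ y ∈ S₁) ∨ (x ∈ S₂ ∧ y ∈ S₂))
  (hsrc : ∀ z, ¬ E z a)
  (pa : V → Bool) (hpa : ∀ x, pa x = true ↔ x ≠ a)
  {u : List V} (hu : ∀ x ∈ u, x ∈ S₁) (hau : a ∈ u)
  {y : V} (hy2 : y ∈ S₂) (hya : y ≠ a)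

include hinter hedges hsrc hpa hu hau hy2 hya

theorem shift_comm (hnE : ¬ E a y) (hnEy : ¬ E y a) :
    LK E (u ++ [y]) (y :: u) := by
  set c := u.takeWhile pa with hc
  set d := (u.dropWhile pa).filter pa with hd
  have hcS : ∀ z ∈ c, LK E [y, z] [z, y] ∧ LK E [z, y] [y, z] := by
    intro z hz
    have hz1 : z ∈ u := List.Sublist.mem hz (List.takeWhile_sublist pa)
    have hza : z ≠ a := (hpa z).1 (List.mem_takeWhile_imp hz)
    have := cross_comm hinter hedges (hu z hz1) hza hy2 hya
    exact ⟨this.symm, this⟩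
  have hdS : ∀ z ∈ d, LK E [y, z] [z, y] ∧ LK E [z, y] [y, z] := by
    intro z hz
    have hz1 : z ∈ u := List.Sublist.mem (List.mem_of_mem_filter hz) (List.dropWhile_sublist pa)
    have hza : z ≠ a := (hpa z).1 (List.of_mem_filter hz)
    have := cross_comm hinter hedges (hu z hz1) hza hy2 hya
    exact ⟨this.symm, this⟩
  have h0 : LK E u (c ++ a :: d) := decomp hsrc pa hpa hau
  have step1 : LK E (u ++ [y]) ((c ++ a :: d) ++ [y]) := h0.append (refl [y])
  have e1 : (c ++ a :: d) ++ [y] = (c ++ [a]) ++ (d ++ [y]) := by simp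
  have step2 : LK E ((c ++ [a]) ++ (d ++ [y])) ((c ++ [a]) ++ (y :: d)) :=
    (refl _).append (move_left (fun z hz => (hdS z hz).1))
  have e2 : (c ++ [a]) ++ (y :: d) = c ++ ([a, y] ++ d) := by simp
  have step3 : LK E (c ++ ([a, y] ++ d)) (c ++ ([y, a] ++ d)) :=
    (refl c).append ((comm (Ne.symm hya) hnE hnEy).append (refl d))
  have e3 : c ++ ([y, a] ++ d) = (c ++ [y]) ++ (a :: d) := by simp
  have step4 : LK E ((c ++ [y]) ++ (a :: d)) ((y :: c) ++ (a :: d)) :=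
    (move_left (fun z hz => (hcS z hz).1)).append (refl _)
  have e4 : (y :: c) ++ (a :: d) = y :: (c ++ a :: d) := by simp
  have step5 : LK E (y :: (c ++ a :: d)) (y :: u) := cons y h0.symm
  exact ((((((((step1.trans (of_eq e1)).trans step2).trans (of_eq e2)).trans
    step3).trans (of_eq e3)).trans step4).trans (of_eq e4)).trans step5)

theorem shift_edge (hE : E a y) :
    LK E (u ++ [y]) (y :: (u ++ [y])) := by
  set c := u.takeWhile pa with hc
  set d := (u.dropWhile pa).filter pa with hd
  have hcS : ∀ z ∈ c, LK E [y, z] [z, y] ∧ LK E [z, y] [y, z] := by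
    intro z hz
    have hz1 : z ∈ u := List.Sublist.mem hz (List.takeWhile_sublist pa)
    have hza : z ≠ a := (hpa z).1 (List.mem_takeWhile_imp hz)
    have := cross_comm hinter hedges (hu z hz1) hza hy2 hya
    exact ⟨this.symm, this⟩
  have hdS : ∀ z ∈ d, LK E [y, z] [z, y] ∧ LK E [z, y] [y, z] := by
    intro z hz
    have hz1 : z ∈ u := List.Sublist.mem (List.mem_of_mem_filter hz) (List.dropWhile_sublist pa)
    have hza : z ≠ a := (hpa z).1 (List.of_mem_filter hz)
    have := cross_comm hinter hedges (hu z hz1) hza hy2 hya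
    exact ⟨this.symm, this⟩
  have h0 : LK E u (c ++ a :: d) := decomp hsrc pa hpa hau
  have step1 : LK E (u ++ [y]) ((c ++ a :: d) ++ [y]) := h0.append (refl [y])
  have e1 : (c ++ a :: d) ++ [y] = (c ++ [a]) ++ (d ++ [y]) := by simp
  have step2 : LK E ((c ++ [a]) ++ (d ++ [y])) ((c ++ [a]) ++ (y :: d)) :=
    (refl _).append (move_left (fun z hz => (hdS z hz).1))
  have e2 : (c ++ [a]) ++ (y :: d) = c ++ ([a, y] ++ d) := by simp
  have step3 : LK E (c ++ ([a, y] ++ d)) (c ++ ([y, a, y] ++ d)) :=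
    (refl c).append ((absorb' hE (hsrc y)).append (refl d))
  have e3 : c ++ ([y, a, y] ++ d) = (c ++ [y]) ++ ([a] ++ (y :: d)) := by simp
  have step4 : LK E ((c ++ [y]) ++ ([a] ++ (y :: d))) ((y :: c) ++ ([a] ++ (y :: d))) :=
    (move_left (fun z hz => (hcS z hz).1)).append (refl _)
  have e4 : (y :: c) ++ ([a] ++ (y :: d)) = y :: ((c ++ [a]) ++ (y :: d)) := by simp
  have step5 : LK E (y :: ((c ++ [a]) ++ (y :: d))) (y :: ((c ++ [a]) ++ (d ++ [y]))) :=
    cons y step2.symm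
  have e5 : y :: ((c ++ [a]) ++ (d ++ [y])) = y :: ((c ++ a :: d) ++ [y]) := by simp
  have step6 : LK E (y :: ((c ++ a :: d) ++ [y])) (y :: (u ++ [y])) :=
    cons y (h0.symm.append (refl [y]))
  exact (((((((((step1.trans (of_eq e1)).trans step2).trans (of_eq e2)).trans
    step3).trans (of_eq e3)).trans step4).trans (of_eq e4)).trans step5).trans
    ((of_eq e5).trans step6))

end Shift
end LK

/-- Merge of a word `u` (over `S₁`) into a word `v` (over `S₂`) at the first `a`. -/
def mergeW {V : Type*} (pa : V → Bool) (u v : List V) : List V :=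
  v.takeWhile pa ++ u ++ (v.dropWhile pa).filter pa

namespace LK
variable {V : Type*} {E : V → V → Prop} {S₁ S₂ : Set V} {a : V}

theorem takeWhile_append_of_mem {pa : V → Bool} (hpaa : pa a = false) :
    ∀ {l₁ : List V} (l₂ : List V), a ∈ l₁ →
      (l₁ ++ l₂).takeWhile pa = l₁.takeWhile pa ∧
      (l₁ ++ l₂).dropWhile pa = l₁.dropWhile pa ++ l₂ := by
  intro l₁
  induction l₁ with
  | nil => simp
  | cons x t ih =>
      intro l₂ hal
      by_cases hx : pa x = true
      · have hxa : x ≠ a := fun h => by rw [h, hpaa] at hx; exact Bool.false_ne_true hx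
        have hat : a ∈ t := by
          rcases List.mem_cons.1 hal with h | h
          · exact absurd h.symm hxa
          · exact h
        obtain ⟨h1, h2⟩ := ih l₂ hat
        rw [List.cons_append, List.takeWhile_cons_of_pos hx, List.takeWhile_cons_of_pos hx,
          List.dropWhile_cons_of_pos hx, List.dropWhile_cons_of_pos hx]
        exact ⟨by rw [h1], h2⟩
      · have hx' : pa x = false := by simpa using hx
        rw [List.cons_append, List.takeWhile_cons_of_neg (by simp [hx']),
          List.takeWhile_cons_of_neg (by simp [hx']),
          List.dropWhile_cons_of_neg (by simp [hx']),
          List.dropWhile_cons_of_neg (by simp [hx'])]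
        simp

theorem takeWhile_append_of_forall {pa : V → Bool} :
    ∀ {l₁ : List V} (l₂ : List V), (∀ x ∈ l₁, pa x = true) →
      (l₁ ++ l₂).takeWhile pa = l₁ ++ l₂.takeWhile pa ∧
      (l₁ ++ l₂).dropWhile pa = l₂.dropWhile pa := by
  intro l₁
  induction l₁ with
  | nil => simp
  | cons x t ih =>
      intro l₂ h
      have hx : pa x = true := h x (by simp)
      obtain ⟨h1, h2⟩ := ih l₂ (fun z hz => h z (by simp [hz]))
      rw [List.cons_append, List.takeWhile_cons_of_pos hx, List.dropWhile_cons_of_pos hx]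
      exact ⟨by rw [h1, List.cons_append], h2⟩

theorem mergeW_append_left {pa : V → Bool} (hpaa : pa a = false) (u : List V)
    {l₁ : List V} (l₂ : List V) (h : a ∈ l₁) :
    mergeW pa u (l₁ ++ l₂) = mergeW pa u l₁ ++ l₂.filter pa := by
  obtain ⟨h1, h2⟩ := takeWhile_append_of_mem hpaa l₂ h
  simp [mergeW, h1, h2, List.filter_append]

theorem mergeW_append_right {pa : V → Bool} (u : List V)
    {l₁ : List V} (l₂ : List V) (h : ∀ x ∈ l₁, pa x = true) :
    mergeW pa u (l₁ ++ l₂) = l₁ ++ mergeW pa u l₂ := by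
  obtain ⟨h1, h2⟩ := takeWhile_append_of_forall l₂ h
  simp [mergeW, h1, h2]

end LK

namespace LK
variable {V : Type*} {E : V → V → Prop} {S₁ S₂ : Set V} {a : V}

theorem inv (hbidir : ∀ x y, ¬ (E x y ∧ E y x)) (hinter : S₁ ∩ S₂ = {a})
    (hedges : ∀ x y, E x y → (x ∈ S₁ ∧ y ∈ S₁) ∨ (x ∈ S₂ ∧ y ∈ S₂))
    (hsrc : ∀ z, ¬ E z a)
    (pa : V → Bool) (hpa : ∀ x, pa x = true ↔ x ≠ a)
    {v v' : FreeMonoid S₂} (h : HKCon (fun x y : S₂ => E x y) v v') :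
    ∀ u : List V, (∀ x ∈ u, x ∈ S₁) → a ∈ u →
      a ∈ (FreeMonoid.toList v).map Subtype.val →
      LK E (mergeW pa u ((FreeMonoid.toList v).map Subtype.val))
        (mergeW pa u ((FreeMonoid.toList v').map Subtype.val)) := by
  have hpaa : pa a = false := by rw [← Bool.not_eq_true, hpa]; simp
  induction h with
  | of r s hrel =>
      intro u hu hau hav
      rcases hrel with ⟨x, rfl, rfl⟩ | ⟨x, y, hne, h1, h2, rfl, rfl⟩ |
        ⟨x, y, h1, h2, rfl, rfl⟩ | ⟨x, y, h1, h2, rfl, rfl⟩ | ⟨x, y, h1, h2, rfl, rfl⟩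
      · -- idempotent
        by_cases hx : (x : V) = a
        · apply of_eq
          simp only [FreeMonoid.toList_mul, FreeMonoid.toList_of, List.map_append,
            List.map_cons, List.map_nil, mergeW]
          simp [List.takeWhile_cons, List.dropWhile_cons, List.filter_cons, hx, hpaa]
        · exfalso
          simp only [FreeMonoid.toList_mul, FreeMonoid.toList_of, List.map_append,
            List.map_cons, List.map_nil, List.mem_append, List.mem_cons] at hav
          rcases hav with (h | h) | (h | h) <;> simp_all
      · -- commuting
        by_cases hx : (x : V) = a
        · have hy : (y : V) ≠ a := fun hc => hne (Subtype.coe_injective (hx.trans hc.symm))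
          have hpy : pa (y : V) = true := (hpa _).2 hy
          have key : LK E (u ++ [(y : V)]) ((y : V) :: u) :=
            shift_comm hinter hedges hsrc pa hpa hu hau y.2 hy (hx ▸ h1) (hx ▸ h2)
          have e1 : mergeW pa u ((FreeMonoid.toList (FreeMonoid.of x * FreeMonoid.of y)).map
              Subtype.val) = u ++ [(y : V)] := by
            simp only [FreeMonoid.toList_mul, FreeMonoid.toList_of, List.map_append,
              List.map_cons, List.map_nil, mergeW]
            simp [List.takeWhile_cons, List.dropWhile_cons, List.filter_cons, hx, hpaa, hpy]
          have e2 : mergeW pa u ((FreeMonoid.toList (FreeMonoid.of y * FreeMonoid.of x)).map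
              Subtype.val) = (y : V) :: u := by
            simp only [FreeMonoid.toList_mul, FreeMonoid.toList_of, List.map_append,
              List.map_cons, List.map_nil, mergeW]
            simp [List.takeWhile_cons, List.dropWhile_cons, List.filter_cons, hx, hpaa, hpy]
          rw [e1, e2]; exact key
        · have hy : (y : V) = a := by
            simp only [FreeMonoid.toList_mul, FreeMonoid.toList_of, List.map_append,
              List.map_cons, List.map_nil, List.mem_append, List.mem_cons] at hav
            rcases hav with (h | h) | (h | h) <;> simp_all
          have hpx : pa (x : V) = true := (hpa _).2 hx
          have key : LK E (u ++ [(x : V)]) ((x : V) :: u) :=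
            shift_comm hinter hedges hsrc pa hpa hu hau x.2 hx (hy ▸ h2) (hy ▸ h1)
          have e1 : mergeW pa u ((FreeMonoid.toList (FreeMonoid.of x * FreeMonoid.of y)).map
              Subtype.val) = (x : V) :: u := by
            simp only [FreeMonoid.toList_mul, FreeMonoid.toList_of, List.map_append,
              List.map_cons, List.map_nil, mergeW]
            simp [List.takeWhile_cons, List.dropWhile_cons, List.filter_cons, hy, hpaa, hpx]
          have e2 : mergeW pa u ((FreeMonoid.toList (FreeMonoid.of y * FreeMonoid.of x)).map
              Subtype.val) = u ++ [(x : V)] := by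
            simp only [FreeMonoid.toList_mul, FreeMonoid.toList_of, List.map_append,
              List.map_cons, List.map_nil, mergeW]
            simp [List.takeWhile_cons, List.dropWhile_cons, List.filter_cons, hy, hpaa, hpx]
          rw [e1, e2]; exact key.symm
      · -- braid
        have hy : (y : V) ≠ a := fun hc => hsrc (x : V) (hc ▸ h1)
        have hpy : pa (y : V) = true := (hpa _).2 hy
        by_cases hx : (x : V) = a
        · have key : LK E (u ++ [(y : V)]) ((y : V) :: (u ++ [(y : V)])) :=
            shift_edge hinter hedges hsrc pa hpa hu hau y.2 hy (hx ▸ h1)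
          have e1 : mergeW pa u ((FreeMonoid.toList (FreeMonoid.of x * FreeMonoid.of y *
              FreeMonoid.of x)).map Subtype.val) = u ++ [(y : V)] := by
            simp only [FreeMonoid.toList_mul, FreeMonoid.toList_of, List.map_append,
              List.map_cons, List.map_nil, mergeW]
            simp [List.takeWhile_cons, List.dropWhile_cons, List.filter_cons, hx, hpaa, hpy]
          have e2 : mergeW pa u ((FreeMonoid.toList (FreeMonoid.of y * FreeMonoid.of x *
              FreeMonoid.of y)).map Subtype.val) = (y : V) :: (u ++ [(y : V)]) := by
            simp only [FreeMonoid.toList_mul, FreeMonoid.toList_of, List.map_append,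
              List.map_cons, List.map_nil, mergeW]
            simp [List.takeWhile_cons, List.dropWhile_cons, List.filter_cons, hx, hpaa, hpy]
          rw [e1, e2]; exact key
        · exfalso
          have hx' : ¬ a = (x : V) := fun h => hx h.symm
          have hy' : ¬ a = (y : V) := fun h => hy h.symm
          simp only [FreeMonoid.toList_mul, FreeMonoid.toList_of, List.map_append,
            List.map_cons, List.map_nil, List.mem_append, List.mem_cons,
            List.not_mem_nil, or_false] at hav
          tauto
      · -- absorb
        have hy : (y : V) ≠ a := fun hc => hsrc (x : V) (hc ▸ h1)
        have hpy : pa (y : V) = true := (hpa _).2 hy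
        by_cases hx : (x : V) = a
        · apply of_eq
          simp only [FreeMonoid.toList_mul, FreeMonoid.toList_of, List.map_append,
            List.map_cons, List.map_nil, mergeW]
          simp [List.takeWhile_cons, List.dropWhile_cons, List.filter_cons, hx, hpaa, hpy]
        · exfalso
          have hx' : ¬ a = (x : V) := fun h => hx h.symm
          have hy' : ¬ a = (y : V) := fun h => hy h.symm
          simp only [FreeMonoid.toList_mul, FreeMonoid.toList_of, List.map_append,
            List.map_cons, List.map_nil, List.mem_append, List.mem_cons,
            List.not_mem_nil, or_false] at hav
          tauto
      · exact absurd ⟨h1, h2⟩ (hbidir _ _)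
  | refl => intro u _ _ _; exact refl _
  | symm h ih =>
      intro u hu hau hav
      have hmem := mem_iff (lift (E := E) h) a
      exact (ih u hu hau (hmem.2 hav)).symm
  | trans h1 h2 ih1 ih2 =>
      intro u hu hau hav
      have hmem := mem_iff (lift (E := E) h1) a
      exact (ih1 u hu hau hav).trans (ih2 u hu hau (hmem.1 hav))
  | mul h1 h2 ih1 ih2 =>
      rename_i v1 v1' v2 v2'
      intro u hu hau hav
      have l1 := (FreeMonoid.toList v1).map (Subtype.val (p := fun x => x ∈ S₂))
      have emul : ∀ (p q : FreeMonoid S₂), (FreeMonoid.toList (p * q)).map Subtype.val =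
          (FreeMonoid.toList p).map Subtype.val ++ (FreeMonoid.toList q).map Subtype.val := by
        intro p q
        simp [FreeMonoid.toList_mul]
      rw [emul] at hav ⊢
      rw [emul]
      have hmem1 := mem_iff (lift (E := E) h1) a
      by_cases ha1 : a ∈ (FreeMonoid.toList v1).map Subtype.val
      · have ha1' : a ∈ (FreeMonoid.toList v1').map Subtype.val := hmem1.1 ha1
        rw [mergeW_append_left hpaa u _ ha1, mergeW_append_left hpaa u _ ha1']
        exact (ih1 u hu hau ha1).append (del hbidir hsrc pa hpa h2)
      · have ha2 : a ∈ (FreeMonoid.toList v2).map Subtype.val := by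
          rcases List.mem_append.1 hav with h | h
          · exact absurd h ha1
          · exact h
        have ha1' : a ∉ (FreeMonoid.toList v1').map Subtype.val := fun hc => ha1 (hmem1.2 hc)
        have hall : ∀ x ∈ (FreeMonoid.toList v1).map Subtype.val, pa x = true :=
          fun x hx => (hpa x).2 (fun hc => ha1 (hc ▸ hx))
        have hall' : ∀ x ∈ (FreeMonoid.toList v1').map Subtype.val, pa x = true :=
          fun x hx => (hpa x).2 (fun hc => ha1' (hc ▸ hx))
        rw [mergeW_append_right u _ hall, mergeW_append_right u _ hall']
        exact (lift (E := E) h1).append (ih2 u hu hau ha2)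
end LK

namespace LK
variable {V : Type*} {E : V → V → Prop} {S₁ S₂ : Set V} {a : V}

theorem filter_takeWhile_comm {pa q : V → Bool} (hq : ∀ x, pa x = false → q x = true) :
    ∀ l : List V, (l.filter q).takeWhile pa = (l.takeWhile pa).filter q ∧
      (l.filter q).dropWhile pa = (l.dropWhile pa).filter q := by
  intro l
  induction l with
  | nil => simp
  | cons x t ih =>
      obtain ⟨ih1, ih2⟩ := ih
      by_cases hqx : q x = true
      · by_cases hpax : pa x = true
        · rw [List.filter_cons_of_pos hqx, List.takeWhile_cons_of_pos hpax,
            List.dropWhile_cons_of_pos hpax, List.takeWhile_cons_of_pos hpax,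
            List.dropWhile_cons_of_pos hpax, List.filter_cons_of_pos hqx]
          exact ⟨by rw [ih1], by rw [ih2]⟩
        · rw [List.filter_cons_of_pos hqx, List.takeWhile_cons_of_neg (by simpa using hpax),
            List.dropWhile_cons_of_neg (by simpa using hpax),
            List.takeWhile_cons_of_neg (by simpa using hpax),
            List.dropWhile_cons_of_neg (by simpa using hpax)]
          exact ⟨by simp, by rw [List.filter_cons_of_pos hqx]⟩
      · have hpax : pa x = true := by
          by_contra hc
          exact hqx (hq x (by simpa using hc))
        rw [List.filter_cons_of_neg (by simpa using hqx), List.takeWhile_cons_of_pos hpax,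
          List.dropWhile_cons_of_pos hpax, List.filter_cons_of_neg (by simpa using hqx)]
        exact ⟨by rw [ih1], by rw [ih2]⟩

theorem filter_filter_comm (p q : V → Bool) (l : List V) :
    (l.filter q).filter p = (l.filter p).filter q := by
  rw [List.filter_filter, List.filter_filter]
  exact List.filter_congr fun x _ => by rw [Bool.and_comm]

/-- The master normal form: any word is congruent to the merge of its two projections,
when `a` is a source. -/
theorem master (hcover : S₁ ∪ S₂ = Set.univ) (hinter : S₁ ∩ S₂ = {a})
    (hedges : ∀ x y, E x y → (x ∈ S₁ ∧ y ∈ S₁) ∨ (x ∈ S₂ ∧ y ∈ S₂))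
    (hsrc : ∀ z, ¬ E z a)
    (pa : V → Bool) (hpa : ∀ x, pa x = true ↔ x ≠ a)
    (p1 : V → Bool) (hp1 : ∀ x, p1 x = true ↔ x ∈ S₁)
    (p2 : V → Bool) (hp2 : ∀ x, p2 x = true ↔ x ∈ S₂)
    (w : List V) :
    LK E w (mergeW pa (w.filter p1) (w.filter p2)) := by
  have hpaa : pa a = false := by rw [← Bool.not_eq_true, hpa]; simp
  have ha1 : a ∈ S₁ := by
    have : a ∈ S₁ ∩ S₂ := by rw [hinter]; rfl
    exact this.1
  have ha2 : a ∈ S₂ := by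
    have : a ∈ S₁ ∩ S₂ := by rw [hinter]; rfl
    exact this.2
  have hp1a : p1 a = true := (hp1 a).2 ha1
  have hp2a : p2 a = true := (hp2 a).2 ha2
  have hq1 : ∀ x, pa x = false → p1 x = true := by
    intro x hx
    have : x = a := by
      by_contra hc
      rw [(hpa x).2 hc] at hx
      simp at hx
    exact this ▸ hp1a
  have hq2 : ∀ x, pa x = false → p2 x = true := by
    intro x hx
    have : x = a := by
      by_contra hc
      rw [(hpa x).2 hc] at hx
      simp at hx
    exact this ▸ hp2a
  -- memberships: non-S₁ elements are in S₂
  have hcov : ∀ x : V, x ∉ S₁ → x ∈ S₂ := by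
    intro x hx
    have : x ∈ S₁ ∪ S₂ := by rw [hcover]; trivial
    exact this.resolve_left hx
  -- commuting hypotheses for a-free lists
  have hcomm : ∀ (l : List V), (∀ x ∈ l, x ≠ a) → ∀ x ∈ l, ∀ y ∈ l,
      p1 x = true → p1 y = false → LK E [x, y] [y, x] ∧ LK E [y, x] [x, y] := by
    intro l hl x hx y hy hpx hpy
    have hy2 : y ∈ S₂ := hcov y (fun hc => by rw [(hp1 y).2 hc] at hpy; simp at hpy)
    have := cross_comm hinter hedges ((hp1 x).1 hpx) (hl x hx) hy2 (hl y hy)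
    exact ⟨this, this.symm⟩
  by_cases haw : a ∈ w
  · -- the case where `a` occurs
    set t := w.takeWhile pa with ht
    set r := (w.dropWhile pa).filter pa with hr
    have htfree : ∀ x ∈ t, x ≠ a := fun x hx => (hpa x).1 (List.mem_takeWhile_imp hx)
    have hrfree : ∀ x ∈ r, x ≠ a := fun x hx => (hpa x).1 (List.of_mem_filter hx)
    have h0 : LK E w (t ++ a :: r) := decomp hsrc pa hpa haw
    -- sort t as B-part ++ A-part
    have hsort_t : LK E t (t.filter (fun x => ! p1 x) ++ t.filter p1) := by
      have := sort (E := E) (fun x => ! p1 x) t ?_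
      · have e : t.filter (fun x => ! ! p1 x) = t.filter p1 :=
          List.filter_congr fun x _ => by simp
        rwa [e] at this
      · intro x hx y hy hxp hyp
        have hpx : p1 x = false := by simpa using hxp
        have hpy : p1 y = true := by simpa using hyp
        have := (hcomm t htfree y hy x hx hpy hpx)
        exact ⟨this.2, this.1⟩
    have hsort_r : LK E r (r.filter p1 ++ r.filter (fun x => ! p1 x)) := by
      apply sort (E := E) p1 r
      intro x hx y hy hxp hyp
      exact hcomm r hrfree x hx y hy hxp hyp
    -- identify !p1 filters with p2 filters on a-free lists
    have hfilter_eq : ∀ (l : List V), (∀ x ∈ l, x ≠ a) →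
        l.filter (fun x => ! p1 x) = l.filter p2 := by
      intro l hl
      apply List.filter_congr
      intro x hx
      by_cases hx1 : x ∈ S₁
      · have hx2 : x ∉ S₂ := fun hc => (hl x hx) (mem_singleton_inter hinter hx1 hc)
        rw [(hp1 x).2 hx1]
        simp [← Bool.not_eq_true, (hp2 x), hx2]
      · have : p1 x = false := by rw [← Bool.not_eq_true, hp1]; exact hx1
        rw [this, (hp2 x).2 (hcov x hx1)]
        simp
    rw [hfilter_eq t htfree] at hsort_t
    rw [hfilter_eq r hrfree] at hsort_r
    -- the middle part: filter p1 w ≡ (filter p1 t) ++ a :: (filter p1 r)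
    have hau1 : a ∈ w.filter p1 := List.mem_filter.2 ⟨haw, hp1a⟩
    obtain ⟨ht1, hd1⟩ := filter_takeWhile_comm hq1 w
    obtain ⟨ht2, hd2⟩ := filter_takeWhile_comm hq2 w
    have hmid : LK E (w.filter p1) (t.filter p1 ++ a :: r.filter p1) := by
      have := decomp (E := E) hsrc pa hpa hau1
      rwa [ht1, hd1, filter_filter_comm] at this
    -- the outer parts
    have e1 : (w.filter p2).takeWhile pa = t.filter p2 := ht2
    have e2 : ((w.filter p2).dropWhile pa).filter pa = r.filter p2 := by
      rw [hd2, filter_filter_comm]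
    -- assemble
    have step1 : LK E (t ++ (a :: r))
        ((t.filter p2 ++ t.filter p1) ++ (a :: (r.filter p1 ++ r.filter p2))) :=
      hsort_t.append (cons a hsort_r)
    have e3 : (t.filter p2 ++ t.filter p1) ++ (a :: (r.filter p1 ++ r.filter p2)) =
        t.filter p2 ++ (t.filter p1 ++ a :: r.filter p1) ++ r.filter p2 := by simp
    have step2 : LK E (t.filter p2 ++ (t.filter p1 ++ a :: r.filter p1) ++ r.filter p2)
        (t.filter p2 ++ w.filter p1 ++ r.filter p2) :=
      ((refl _).append hmid.symm).append (refl _)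
    have e4 : t.filter p2 ++ w.filter p1 ++ r.filter p2 =
        mergeW pa (w.filter p1) (w.filter p2) := by
      rw [mergeW, e1, e2]
    exact (((h0.trans step1).trans (of_eq e3)).trans step2).trans (of_eq e4)
  · -- `a` does not occur in `w`
    have hwfree : ∀ x ∈ w, x ≠ a := fun x hx hc => haw (hc ▸ hx)
    have hall2 : ∀ x ∈ w.filter p2, pa x = true :=
      fun x hx => (hpa x).2 (hwfree x (List.mem_of_mem_filter hx))
    obtain ⟨e1, e2⟩ := takeWhile_append_of_forall (pa := pa) [] hall2
    rw [List.append_nil] at e1 e2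
    have hsort : LK E w (w.filter p2 ++ w.filter (fun x => ! p2 x)) := by
      have := sort (E := E) p2 w ?_
      · exact this
      · intro x hx y hy hxp hyp
        have hy1 : y ∈ S₁ := by
          by_contra hc
          rw [(hp2 y).2 (hcov y hc)] at hyp
          simp at hyp
        have := cross_comm hinter hedges hy1 (hwfree y hy) ((hp2 x).1 hxp) (hwfree x hx)
        exact ⟨this.symm, this⟩
    have hfe : w.filter (fun x => ! p2 x) = w.filter p1 := by
      apply List.filter_congr
      intro x hx
      by_cases hx2 : x ∈ S₂
      · have hx1 : x ∉ S₁ := fun hc => (hwfree x hx) (mem_singleton_inter hinter hc hx2)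
        rw [(hp2 x).2 hx2]
        simp [← Bool.not_eq_true, hp1, hx1]
      · have hx1 : x ∈ S₁ := by
          have : x ∈ S₁ ∪ S₂ := by rw [hcover]; trivial
          exact this.resolve_right hx2
        have : p2 x = false := by rw [← Bool.not_eq_true, hp2]; exact hx2
        rw [this, (hp1 x).2 hx1]
        simp
    rw [hfe] at hsort
    have e3 : w.filter p2 ++ w.filter p1 = mergeW pa (w.filter p1) (w.filter p2) := by
      rw [mergeW, e1, e2]
      simp
    exact hsort.trans (of_eq e3)

end LK

namespace LK
variable {V : Type*} {E : V → V → Prop} {S₁ S₂ : Set V} {a : V}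

theorem proj_spec (S : Set V) (pS : V → Bool) (hpS : ∀ x, pS x = true ↔ x ∈ S) :
    ∀ l : List V,
      (FreeMonoid.toList (projWord S (FreeMonoid.ofList l))).map Subtype.val = l.filter pS := by
  intro l
  induction l with
  | nil => rfl
  | cons x t ih =>
      simp only [projWord, FreeMonoid.toList_ofList] at ih ⊢
      rw [List.filterMap_cons]
      by_cases hx : x ∈ S
      · rw [dif_pos hx, List.filter_cons_of_pos ((hpS x).2 hx), List.map_cons, ih]
      · rw [dif_neg hx, List.filter_cons_of_neg (by simp [← Bool.not_eq_true, hpS, hx])]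
        exact ih

theorem src_case (hbidir : ∀ x y, ¬ (E x y ∧ E y x))
    (hcover : S₁ ∪ S₂ = Set.univ) (hinter : S₁ ∩ S₂ = {a})
    (hedges : ∀ x y, E x y → (x ∈ S₁ ∧ y ∈ S₁) ∨ (x ∈ S₂ ∧ y ∈ S₂))
    (hsrc : ∀ z, ¬ E z a)
    (w w' : FreeMonoid V)
    (H1 : HKCon (fun x y : S₁ => E x y) (projWord S₁ w) (projWord S₁ w'))
    (H2 : HKCon (fun x y : S₂ => E x y) (projWord S₂ w) (projWord S₂ w')) :
    HKCon E w w' := by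
  classical
  set lw := FreeMonoid.toList w with hlw
  set lw' := FreeMonoid.toList w' with hlw'
  set pa : V → Bool := fun x => decide (x ≠ a) with hpadef
  set p1 : V → Bool := fun x => decide (x ∈ S₁) with hp1def
  set p2 : V → Bool := fun x => decide (x ∈ S₂) with hp2def
  have hpa : ∀ x, pa x = true ↔ x ≠ a := fun x => by simp [hpadef]
  have hp1 : ∀ x, p1 x = true ↔ x ∈ S₁ := fun x => by simp [hp1def]
  have hp2 : ∀ x, p2 x = true ↔ x ∈ S₂ := fun x => by simp [hp2def]
  have ha1 : a ∈ S₁ := by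
    have : a ∈ S₁ ∩ S₂ := by rw [hinter]; rfl
    exact this.1
  have ha2 : a ∈ S₂ := by
    have : a ∈ S₁ ∩ S₂ := by rw [hinter]; rfl
    exact this.2
  have e1 : (FreeMonoid.toList (projWord S₁ w)).map Subtype.val = lw.filter p1 := by
    have := proj_spec S₁ p1 hp1 lw
    rwa [hlw, FreeMonoid.ofList_toList] at this
  have e1' : (FreeMonoid.toList (projWord S₁ w')).map Subtype.val = lw'.filter p1 := by
    have := proj_spec S₁ p1 hp1 lw'
    rwa [hlw', FreeMonoid.ofList_toList] at this
  have e2 : (FreeMonoid.toList (projWord S₂ w)).map Subtype.val = lw.filter p2 := by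
    have := proj_spec S₂ p2 hp2 lw
    rwa [hlw, FreeMonoid.ofList_toList] at this
  have e2' : (FreeMonoid.toList (projWord S₂ w')).map Subtype.val = lw'.filter p2 := by
    have := proj_spec S₂ p2 hp2 lw'
    rwa [hlw', FreeMonoid.ofList_toList] at this
  have H1L : LK E (lw.filter p1) (lw'.filter p1) := by
    have := lift (E := E) H1
    rwa [e1, e1'] at this
  have H2L : LK E (lw.filter p2) (lw'.filter p2) := by
    have := lift (E := E) H2
    rwa [e2, e2'] at this
  have hp1a : p1 a = true := (hp1 a).2 ha1
  have hp2a : p2 a = true := (hp2 a).2 ha2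
  have haiff : a ∈ lw ↔ a ∈ lw' := by
    constructor
    · intro h
      have := (mem_iff H1L a).1 (List.mem_filter.2 ⟨h, hp1a⟩)
      exact List.mem_of_mem_filter this
    · intro h
      have := (mem_iff H1L a).2 (List.mem_filter.2 ⟨h, hp1a⟩)
      exact List.mem_of_mem_filter this
  have M : LK E lw (mergeW pa (lw.filter p1) (lw.filter p2)) :=
    master hcover hinter hedges hsrc pa hpa p1 hp1 p2 hp2 lw
  have M' : LK E lw' (mergeW pa (lw'.filter p1) (lw'.filter p2)) :=
    master hcover hinter hedges hsrc pa hpa p1 hp1 p2 hp2 lw'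
  have stepU : LK E (mergeW pa (lw.filter p1) (lw.filter p2))
      (mergeW pa (lw'.filter p1) (lw.filter p2)) :=
    ((refl _).append H1L).append (refl _)
  have stepV : LK E (mergeW pa (lw'.filter p1) (lw.filter p2))
      (mergeW pa (lw'.filter p1) (lw'.filter p2)) := by
    by_cases haw : a ∈ lw
    · have hau' : a ∈ lw'.filter p1 := List.mem_filter.2 ⟨haiff.1 haw, hp1a⟩
      have hu' : ∀ x ∈ lw'.filter p1, x ∈ S₁ := fun x hx => (hp1 x).1 (List.of_mem_filter hx)
      have hav : a ∈ (FreeMonoid.toList (projWord S₂ w)).map Subtype.val := by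
        rw [e2]; exact List.mem_filter.2 ⟨haw, hp2a⟩
      have := inv hbidir hinter hedges hsrc pa hpa H2 (lw'.filter p1) hu' hau' hav
      rwa [e2, e2'] at this
    · have haw' : a ∉ lw' := fun h => haw (haiff.2 h)
      have hall : ∀ x ∈ lw.filter p2, pa x = true := fun x hx =>
        (hpa x).2 (fun hc => haw (hc ▸ List.mem_of_mem_filter hx))
      have hall' : ∀ x ∈ lw'.filter p2, pa x = true := fun x hx =>
        (hpa x).2 (fun hc => haw' (hc ▸ List.mem_of_mem_filter hx))
      obtain ⟨f1, f2⟩ := takeWhile_append_of_forall (pa := pa) [] hall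
      obtain ⟨f1', f2'⟩ := takeWhile_append_of_forall (pa := pa) [] hall'
      rw [List.append_nil] at f1 f2 f1' f2'
      have g : mergeW pa (lw'.filter p1) (lw.filter p2) =
          lw.filter p2 ++ lw'.filter p1 := by
        simp only [mergeW]
        rw [f1, f2]
        simp
      have g' : mergeW pa (lw'.filter p1) (lw'.filter p2) =
          lw'.filter p2 ++ lw'.filter p1 := by
        simp only [mergeW]
        rw [f1', f2']
        simp
      rw [g, g']
      exact H2L.append (refl _)
  exact ((M.trans stepU).trans (stepV.trans M'.symm)).trans (refl _)

end LK

namespace LK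
variable {V : Type*}

theorem bidir {E : V → V → Prop} {x y : V} (h1 : E x y) (h2 : E y x) :
    LK E [x, y, x] [y, x, y] :=
  of_rel (Or.inr (Or.inr (Or.inr (Or.inr ⟨x, y, h1, h2, rfl, rfl⟩))))

theorem rev {E E' : V → V → Prop} (hE : ∀ x y, E' x y ↔ E y x)
    {u v : FreeMonoid V} (h : HKCon E u v) :
    HKCon E' (FreeMonoid.ofList (FreeMonoid.toList u).reverse)
      (FreeMonoid.ofList (FreeMonoid.toList v).reverse) := by
  induction h with
  | of r s hrel =>
      rcases hrel with ⟨x, rfl, rfl⟩ | ⟨x, y, hne, h1, h2, rfl, rfl⟩ |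
        ⟨x, y, h1, h2, rfl, rfl⟩ | ⟨x, y, h1, h2, rfl, rfl⟩ | ⟨x, y, h1, h2, rfl, rfl⟩
      · exact idem x
      · exact comm (Ne.symm hne) (fun hc => h1 ((hE y x).1 hc)) (fun hc => h2 ((hE x y).1 hc))
      · exact (braid (E := E') (x := y) (y := x) ((hE y x).2 h1)
          (fun hc => h2 ((hE x y).1 hc))).symm
      · exact ((braid (E := E') (x := y) (y := x) ((hE y x).2 h1)
          (fun hc => h2 ((hE x y).1 hc))).symm).trans
          (absorb (E := E') (x := y) (y := x) ((hE y x).2 h1)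
            (fun hc => h2 ((hE x y).1 hc)))
      · exact bidir ((hE x y).2 h2) ((hE y x).2 h1)
  | refl => exact (HKCon E').refl _
  | symm _ ih => exact (HKCon E').symm ih
  | trans _ _ ih1 ih2 => exact (HKCon E').trans ih1 ih2
  | mul _ _ ih1 ih2 =>
      have := (HKCon E').mul ih2 ih1
      simpa [FreeMonoid.toList_mul, List.reverse_append] using this

theorem proj_rev (S : Set V) (w : FreeMonoid V) :
    projWord S (FreeMonoid.ofList (FreeMonoid.toList w).reverse) =
      FreeMonoid.ofList (FreeMonoid.toList (projWord S w)).reverse := by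
  simp only [projWord, FreeMonoid.toList_ofList, List.filterMap_reverse]

end LK


/-- If `Γ` is the union of two full subgraphs sharing no edges and meeting in a single
vertex `a` which is a source or a sink, then the pair of canonical projections
`(p₁, p₂) : HK_Γ → HK_{Γ₁} × HK_{Γ₂}` is injective. -/
theorem hk_gluing_projection_injective {V : Type*} (E : V → V → Prop)
    (hbidir : ∀ x y, ¬ (E x y ∧ E y x)) (hloop : ∀ x, ¬ E x x)
    (S₁ S₂ : Set V) (a : V)
    (hcover : S₁ ∪ S₂ = Set.univ) (hinter : S₁ ∩ S₂ = {a})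
    (hedges : ∀ x y, E x y → (x ∈ S₁ ∧ y ∈ S₁) ∨ (x ∈ S₂ ∧ y ∈ S₂))
    (hnoshared : ∀ x y, E x y → ¬ ((x ∈ S₁ ∧ y ∈ S₁) ∧ (x ∈ S₂ ∧ y ∈ S₂)))
    (ha : (∀ z, ¬ E z a) ∨ (∀ z, ¬ E a z)) :
    ∀ w w' : FreeMonoid V,
      HKmk (fun x y : S₁ => E x y) (projWord S₁ w) =
        HKmk (fun x y : S₁ => E x y) (projWord S₁ w') →
      HKmk (fun x y : S₂ => E x y) (projWord S₂ w) =
        HKmk (fun x y : S₂ => E x y) (projWord S₂ w') →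
      HKmk E w = HKmk E w' := by
  intro w w' H1 H2
  have H1c : HKCon (fun x y : S₁ => E x y) (projWord S₁ w) (projWord S₁ w') :=
    (Con.eq _).1 H1
  have H2c : HKCon (fun x y : S₂ => E x y) (projWord S₂ w) (projWord S₂ w') :=
    (Con.eq _).1 H2
  apply (Con.eq _).2
  rcases ha with hsrc | hsink
  · exact LK.src_case hbidir hcover hinter hedges hsrc w w' H1c H2c
  · -- sink case : apply the source case to the reversed graph and reversed words
    set E' : V → V → Prop := fun x y => E y x with hE'
    have hE : ∀ x y, E' x y ↔ E y x := fun x y => Iff.rfl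
    have hbidir' : ∀ x y, ¬ (E' x y ∧ E' y x) := fun x y hc => hbidir x y ⟨hc.2, hc.1⟩
    have hedges' : ∀ x y, E' x y → (x ∈ S₁ ∧ y ∈ S₁) ∨ (x ∈ S₂ ∧ y ∈ S₂) := by
      intro x y h
      rcases hedges y x h with ⟨h1, h2⟩ | ⟨h1, h2⟩
      · exact Or.inl ⟨h2, h1⟩
      · exact Or.inr ⟨h2, h1⟩
    have hsrc' : ∀ z, ¬ E' z a := fun z hc => hsink z hc
    set wR := FreeMonoid.ofList (FreeMonoid.toList w).reverse with hwR
    set wR' := FreeMonoid.ofList (FreeMonoid.toList w').reverse with hwR'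
    have H1R : HKCon (fun x y : S₁ => E' x y) (projWord S₁ wR) (projWord S₁ wR') := by
      rw [hwR, hwR', LK.proj_rev, LK.proj_rev]
      exact LK.rev (fun x y => Iff.rfl) H1c
    have H2R : HKCon (fun x y : S₂ => E' x y) (projWord S₂ wR) (projWord S₂ wR') := by
      rw [hwR, hwR', LK.proj_rev, LK.proj_rev]
      exact LK.rev (fun x y => Iff.rfl) H2c
    have main : HKCon E' wR wR' :=
      LK.src_case hbidir' hcover hinter hedges' hsrc' wR wR' H1R H2R
    have final := LK.rev (E' := E) (fun x y => Iff.rfl) main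
    rw [hwR, hwR'] at final
    simpa [FreeMonoid.toList_ofList, List.reverse_reverse, FreeMonoid.ofList_toList]
      using final
end

section
/- Let Γ = Γ₁ ∪ Γ₂ be a union of full subgraphs sharing no edges with V(Γ₁) ∩ V(Γ₂) = {a}, a a source or sink. Let f₁, f₂ be nonzero weight functions on Γ₁, Γ₂ and f their common extension to Γ. Then the representation R_f of HK_Γ is effective if and only if both R_{f₁} of HK_{Γ₁} and R_{f₂} of HK_{Γ₂} are effective. -/
open scoped Classical

/-!
Since `a` is a source (resp. a sink), `a u a = a u` (resp. `u a`) in `HK_Γ` for every word `u`,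
so every element of `HK_Γ` is represented by a word `u` or `u a v` with `u`, `v` free of `a`.
Letters of `Γ₁ ∖ a` commute with letters of `Γ₂ ∖ a`, hence such an element is determined by
whether it involves `a` and by its images in `HK_{Γ₁}` and `HK_{Γ₂}` under deleting the letters
of the other piece.

On the linear side the spans of the two pieces are invariant subspaces (source), or their
coordinates are quotients (sink), of the free module on `V(Γ)`, on which `θ_x` acts as the
operator of `Γᵢ` (or trivially). So `R_f(w)` is determined by, and determines, the `R_{fᵢ}` of the
two projections of `w`; whether `w` involves `a` is read off from `R_f(w)` at `a`, and a word of
`Γ₁` projects to a power of `a` in `Γ₂`, which acts as `θ_a` or as `1`.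
-/

open FreeMonoid

section HKMonoid

variable {V : Type*} (E : V → V → Prop)

lemma HKmk_eq_of_HKRel {p q : FreeMonoid V} (h : HKRel E p q) : HKmk E p = HKmk E q :=
  (Con.eq _).2 (ConGen.Rel.of _ _ h)

@[simp]
lemma HKmk_of_mul_self (x : V) : HKmk E (of x) * HKmk E (of x) = HKmk E (of x) := by
  rw [← map_mul]
  exact HKmk_eq_of_HKRel E (Or.inl ⟨x, rfl, rfl⟩)

lemma commute_HKmk_of {x y : V} (hxy : x ≠ y) (h₁ : ¬E x y) (h₂ : ¬E y x) :
    Commute (HKmk E (of x)) (HKmk E (of y)) := by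
  rw [Commute, SemiconjBy, ← map_mul, ← map_mul]
  exact HKmk_eq_of_HKRel E (Or.inr (Or.inl ⟨x, y, hxy, h₁, h₂, rfl, rfl⟩))

lemma HKmk_braid {x y : V} (h : E x y) :
    HKmk E (of x) * HKmk E (of y) * HKmk E (of x) =
      HKmk E (of y) * HKmk E (of x) * HKmk E (of y) := by
  simp only [← map_mul]
  by_cases h' : E y x
  · exact HKmk_eq_of_HKRel E (Or.inr (Or.inr (Or.inr (Or.inr ⟨x, y, h, h', rfl, rfl⟩))))
  · exact HKmk_eq_of_HKRel E (Or.inr (Or.inr (Or.inl ⟨x, y, h, h', rfl, rfl⟩)))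

lemma HKmk_absorb {x y : V} (h : E x y) (h' : ¬E y x) :
    HKmk E (of x) * HKmk E (of y) * HKmk E (of x) = HKmk E (of x) * HKmk E (of y) := by
  simp only [← map_mul]
  exact HKmk_eq_of_HKRel E (Or.inr (Or.inr (Or.inr (Or.inl ⟨x, y, h, h', rfl, rfl⟩))))

lemma map_eq_map_of_HKmk_eq {M : Type*} [Monoid M] (ψ : FreeMonoid V →* M)
    (hidem : ∀ x, ψ (of x) * ψ (of x) = ψ (of x))
    (hcomm : ∀ x y, x ≠ y → ¬E x y → ¬E y x → Commute (ψ (of x)) (ψ (of y)))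
    (hbraid : ∀ x y, E x y → ψ (of x) * ψ (of y) * ψ (of x) = ψ (of y) * ψ (of x) * ψ (of y))
    (habsorb : ∀ x y, E x y → ¬E y x → ψ (of x) * ψ (of y) * ψ (of x) = ψ (of x) * ψ (of y))
    {w w' : FreeMonoid V} (h : HKmk E w = HKmk E w') : ψ w = ψ w' := by
  have hle : HKCon E ≤ Con.ker ψ := Con.conGen_le.2 fun p q hpq => by
    rcases hpq with ⟨x, rfl, rfl⟩ | ⟨x, y, hxy, h₁, h₂, rfl, rfl⟩ | ⟨x, y, h₁, -, rfl, rfl⟩ |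
      ⟨x, y, h₁, h₂, rfl, rfl⟩ | ⟨x, y, h₁, -, rfl, rfl⟩ <;>
      simp only [Con.ker_rel, map_mul]
    exacts [hidem x, hcomm x y hxy h₁ h₂, hbraid x y h₁, habsorb x y h₁ h₂, hbraid x y h₁]
  exact hle ((Con.eq _).1 h)

lemma commute_HKmk_of_forall {u v : FreeMonoid V}
    (h : ∀ c ∈ u.toList, ∀ d ∈ v.toList, c ≠ d ∧ ¬E c d ∧ ¬E d c) :
    Commute (HKmk E u) (HKmk E v) := by
  have hletter (c : V) (v : FreeMonoid V) (hv : ∀ d ∈ v.toList, c ≠ d ∧ ¬E c d ∧ ¬E d c) :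
      Commute (HKmk E (of c)) (HKmk E v) := by
    induction v using FreeMonoid.inductionOn' with
    | one => rw [map_one]; exact Commute.one_right _
    | of_mul d v ih =>
      simp only [toList_of_mul, List.mem_cons, forall_eq_or_imp] at hv
      rw [map_mul]
      exact (commute_HKmk_of E hv.1.1 hv.1.2.1 hv.1.2.2).mul_right (ih hv.2)
  induction u using FreeMonoid.inductionOn' with
  | one => rw [map_one]; exact Commute.one_left _
  | of_mul c u ih =>
    simp only [toList_of_mul, List.mem_cons, forall_eq_or_imp] at h
    rw [map_mul]
    exact (hletter c v h.1).mul_left (ih h.2)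

variable {a : V}

lemma HKmk_sandwich_of_source (ha : ∀ z, ¬E z a) (u : FreeMonoid V) :
    HKmk E (of a) * HKmk E u * HKmk E (of a) = HKmk E (of a) * HKmk E u := by
  have hletter (c : V) :
      HKmk E (of a) * HKmk E (of c) * HKmk E (of a) = HKmk E (of a) * HKmk E (of c) := by
    by_cases hca : c = a
    · subst hca; simp
    by_cases hac : E a c
    · exact HKmk_absorb E hac (ha c)
    · rw [mul_assoc, (commute_HKmk_of E hca (ha c) hac).eq, ← mul_assoc, HKmk_of_mul_self]
  induction u using FreeMonoid.inductionOn' with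
  | one => simp
  | of_mul c u ih =>
    calc HKmk E (of a) * HKmk E (of c * u) * HKmk E (of a)
        = HKmk E (of a) * HKmk E (of c) * HKmk E (of a) * (HKmk E u * HKmk E (of a)) := by
          rw [hletter, map_mul]; simp only [mul_assoc]
      _ = HKmk E (of a) * HKmk E (of c) * (HKmk E (of a) * HKmk E u * HKmk E (of a)) := by
          simp only [mul_assoc]
      _ = HKmk E (of a) * HKmk E (of c * u) := by
          rw [ih, ← mul_assoc, hletter, map_mul, mul_assoc]

lemma HKmk_sandwich_of_sink (ha : ∀ z, ¬E a z) (u : FreeMonoid V) :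
    HKmk E (of a) * HKmk E u * HKmk E (of a) = HKmk E u * HKmk E (of a) := by
  have hletter (c : V) :
      HKmk E (of a) * HKmk E (of c) * HKmk E (of a) = HKmk E (of c) * HKmk E (of a) := by
    by_cases hca : c = a
    · subst hca; simp
    by_cases hac : E c a
    · exact (HKmk_braid E hac).symm.trans (HKmk_absorb E hac (ha c))
    · rw [← (commute_HKmk_of E hca hac (ha c)).eq, mul_assoc, HKmk_of_mul_self]
  induction u using FreeMonoid.inductionOn' with
  | one => simp
  | of_mul c u ih =>
    calc HKmk E (of a) * HKmk E (of c * u) * HKmk E (of a)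
        = HKmk E (of a) * HKmk E (of c) * (HKmk E (of a) * HKmk E u * HKmk E (of a)) := by
          rw [ih, map_mul]; simp only [mul_assoc]
      _ = HKmk E (of a) * HKmk E (of c) * HKmk E (of a) * (HKmk E u * HKmk E (of a)) := by
          simp only [mul_assoc]
      _ = HKmk E (of c * u) * HKmk E (of a) := by
          rw [hletter, mul_assoc, ← mul_assoc (HKmk E (of a)), ih, map_mul]
          simp only [mul_assoc]

lemma exists_HKmk_eq_mul_of_mul (ha : (∀ z, ¬E z a) ∨ (∀ z, ¬E a z)) {w : FreeMonoid V}
    (hw : a ∈ w.toList) : ∃ u v : FreeMonoid V, a ∉ u.toList ∧ a ∉ v.toList ∧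
      HKmk E w = HKmk E u * HKmk E (of a) * HKmk E v := by
  induction w using FreeMonoid.inductionOn' with
  | one => simp at hw
  | of_mul c w ih =>
    by_cases haw : a ∈ w.toList
    swap
    · have hca : c = a := by simpa [haw, eq_comm] using hw
      exact ⟨1, w, by simp, haw, by rw [map_mul, map_one, one_mul, hca]⟩
    obtain ⟨u, v, hu, hv, hw'⟩ := ih haw
    by_cases hca : c = a
    swap
    · refine ⟨of c * u, v, by simp [hu, Ne.symm hca], hv, ?_⟩
      rw [map_mul, hw', map_mul]; simp only [mul_assoc]
    subst hca
    rcases ha with hsrc | hsink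
    · refine ⟨1, u * v, by simp, by simp [hu, hv], ?_⟩
      rw [map_mul, hw', map_one, one_mul, map_mul, ← mul_assoc, ← mul_assoc,
        HKmk_sandwich_of_source E hsrc, mul_assoc]
    · refine ⟨u, v, hu, hv, ?_⟩
      rw [map_mul, hw', ← mul_assoc, ← mul_assoc, HKmk_sandwich_of_sink E hsink]

end HKMonoid

section Restrict

variable {V : Type*}

abbrev induce {α : Type*} (S : Set V) (g : V → V → α) : S → S → α := fun x y => g x y

noncomputable def restrictWord (S : Set V) : FreeMonoid V →* FreeMonoid S :=
  FreeMonoid.lift fun v => if h : v ∈ S then of ⟨v, h⟩ else 1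

noncomputable def eraseOutside (S : Set V) : FreeMonoid V →* FreeMonoid V :=
  (map Subtype.val).comp (restrictWord S)

variable {S : Set V}

@[simp]
lemma restrictWord_of_mem {v : V} (h : v ∈ S) : restrictWord S (of v) = of ⟨v, h⟩ := by
  rw [restrictWord, lift_eval_of, dif_pos h]

@[simp]
lemma restrictWord_of_notMem {v : V} (h : v ∉ S) : restrictWord S (of v) = 1 := by
  rw [restrictWord, lift_eval_of, dif_neg h]

@[simp]
lemma restrictWord_map_val (u : FreeMonoid S) : restrictWord S (map Subtype.val u) = u := by
  induction u using FreeMonoid.inductionOn' with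
  | one => simp
  | of_mul s u ih => simp [ih]

@[simp]
lemma eraseOutside_of_mem {v : V} (h : v ∈ S) : eraseOutside S (of v) = of v := by
  simp [eraseOutside, h]

@[simp]
lemma eraseOutside_of_notMem {v : V} (h : v ∉ S) : eraseOutside S (of v) = 1 := by
  simp [eraseOutside, h]

lemma mem_toList_eraseOutside {c : V} {w : FreeMonoid V} :
    c ∈ (eraseOutside S w).toList ↔ c ∈ S ∧ c ∈ w.toList := by
  induction w using FreeMonoid.inductionOn' with
  | one => simp
  | of_mul d w ih =>
    by_cases hd : d ∈ S
    · simp only [map_mul, eraseOutside_of_mem hd, toList_of_mul, List.mem_cons, ih]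
      grind
    · simp only [map_mul, eraseOutside_of_notMem hd, one_mul, ih, toList_of_mul, List.mem_cons]
      grind

variable (E : V → V → Prop)

lemma HKmk_restrictWord_eq {w w' : FreeMonoid V} (h : HKmk E w = HKmk E w') :
    HKmk (induce S E) (restrictWord S w) = HKmk (induce S E) (restrictWord S w') := by
  refine map_eq_map_of_HKmk_eq E ((HKmk (induce S E)).comp (restrictWord S))
    (fun x => by by_cases hx : x ∈ S <;> simp [hx]) (fun x y hxy h₁ h₂ => ?_)
    (fun x y h₁ => ?_) (fun x y h₁ h₂ => ?_) h <;>
    by_cases hx : x ∈ S <;> by_cases hy : y ∈ S <;>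
    simp only [MonoidHom.comp_apply, restrictWord_of_mem, restrictWord_of_notMem, hx, hy,
      not_false_eq_true, map_one, one_mul, mul_one, HKmk_of_mul_self, Commute.one_left,
      Commute.one_right]
  · exact commute_HKmk_of (induce S E) (x := ⟨x, hx⟩) (y := ⟨y, hy⟩)
      (fun he => hxy (congrArg Subtype.val he)) h₁ h₂
  · exact HKmk_braid (induce S E) (x := ⟨x, hx⟩) (y := ⟨y, hy⟩) h₁
  · exact HKmk_absorb (induce S E) (x := ⟨x, hx⟩) (y := ⟨y, hy⟩) h₁ h₂

lemma HKmk_map_val_eq {u u' : FreeMonoid S}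
    (h : HKmk (induce S E) u = HKmk (induce S E) u') :
    HKmk E (map Subtype.val u) = HKmk E (map Subtype.val u') :=
  map_eq_map_of_HKmk_eq (induce S E) ((HKmk E).comp (map Subtype.val)) (fun x => by simp)
    (fun x y hxy h₁ h₂ => by
      simpa using commute_HKmk_of E (Subtype.val_injective.ne hxy) h₁ h₂)
    (fun x y h => by simpa using HKmk_braid E h)
    (fun x y h h' => by simpa using HKmk_absorb E h h') h

lemma HKmk_eraseOutside_eq {w w' : FreeMonoid V} (h : HKmk E w = HKmk E w') :
    HKmk E (eraseOutside S w) = HKmk E (eraseOutside S w') :=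
  HKmk_map_val_eq E (HKmk_restrictWord_eq E h)

end Restrict

section Representation

variable {V : Type*} [Fintype V] {R : Type*} [CommRing R] (E : V → V → Prop) (f : V → V → R)

lemma theta_apply (x : V) (v : V →₀ R) (z : V) :
    theta E f x v z = (if z = x then 0 else v z) + if E z x then f z x * v x else 0 := by
  induction v using Finsupp.induction_linear with
  | zero => simp
  | add v v' hv hv' =>
    simp only [map_add, Finsupp.add_apply, hv, hv']
    split_ifs <;> ring
  | single y r =>
    rw [theta, Finsupp.lsum_single]
    by_cases hyx : y = x
    swap
    · simp only [hyx, if_false, Finsupp.lsingle_apply, Finsupp.single_apply]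
      split_ifs <;> simp_all
    subst hyx
    have hterm (i : V) :
        (if E i y then f i y • Finsupp.lsingle i else 0 : R →ₗ[R] V →₀ R) r z =
          if i = z then (if E z y then f z y * r else 0) else 0 := by
      rcases eq_or_ne i z with rfl | hi <;> by_cases he : E i y <;> simp [*]
    rw [if_pos rfl, LinearMap.sum_apply, Finsupp.finsetSum_apply,
      Finset.sum_congr rfl fun i _ => hterm i, Finset.sum_ite_eq']
    by_cases hzy : z = y <;> simp [hzy]

lemma Rword_of (x : V) : Rword E f (of x) = theta E f x := lift_eval_of _ _

lemma theta_mul_self {x : V} (hx : ¬E x x) : theta E f x * theta E f x = theta E f x :=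
  LinearMap.ext fun v => Finsupp.ext fun z => by
    by_cases hzx : z = x
    · subst hzx; simp [theta_apply, hx]
    · simp [theta_apply, hzx, hx]

def OutClosed (S : Set V) : Prop := ∀ ⦃z x⦄, E z x → z ∈ S → x ∈ S

def InClosed (S : Set V) : Prop := ∀ ⦃z x⦄, E z x → x ∈ S → z ∈ S

variable {E} {S : Set V}

lemma subtypeDomain_Rword (hS : OutClosed E S) (w : FreeMonoid V) (v : V →₀ R) :
    (Rword E f w v).subtypeDomain (· ∈ S) =
      Rword (induce S E) (induce S f) (restrictWord S w) (v.subtypeDomain (· ∈ S)) := by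
  induction w using FreeMonoid.inductionOn' with
  | one => simp
  | of_mul x w ih =>
    rw [map_mul, map_mul, map_mul, Module.End.mul_apply, Module.End.mul_apply, ← ih, Rword_of]
    ext t
    by_cases hx : x ∈ S
    · simp [hx, Rword_of, theta_apply, Subtype.ext_iff]
    · have hE : ¬E t x := fun h => hx (hS h t.2)
      have htx : (t : V) ≠ x := fun h => hx (h ▸ t.2)
      simp [hx, theta_apply, hE, htx]

lemma Rword_extendDomain (hS : InClosed E S) (w : FreeMonoid V) (u : S →₀ R) :
    Rword E f w u.extendDomain =
      (Rword (induce S E) (induce S f) (restrictWord S w) u).extendDomain := by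
  induction w using FreeMonoid.inductionOn' with
  | one => simp
  | of_mul x w ih =>
    rw [map_mul, map_mul, map_mul, Module.End.mul_apply, Module.End.mul_apply, ih, Rword_of]
    ext z
    by_cases hx : x ∈ S
    · by_cases hz : z ∈ S
      · simp [hx, hz, Rword_of, theta_apply, Subtype.ext_iff]
      · have hE : ¬E z x := fun h => hz (hS h hx)
        have hzx : z ≠ x := fun h => hz (h ▸ hx)
        simp [hx, hz, theta_apply, hE, hzx]
    · by_cases hzx : z = x
      · subst hzx; simp [hx, theta_apply]
      · simp [hx, theta_apply, hzx]

lemma Rword_restrictWord_eq_of_outClosed (hS : OutClosed E S) {w w' : FreeMonoid V}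
    (h : Rword E f w = Rword E f w') :
    Rword (induce S E) (induce S f) (restrictWord S w) =
      Rword (induce S E) (induce S f) (restrictWord S w') :=
  LinearMap.ext fun u => by
    simpa [subtypeDomain_Rword f hS] using
      congrArg (fun g => (g u.extendDomain).subtypeDomain (· ∈ S)) h

lemma Rword_restrictWord_eq_of_inClosed (hS : InClosed E S) {w w' : FreeMonoid V}
    (h : Rword E f w = Rword E f w') :
    Rword (induce S E) (induce S f) (restrictWord S w) =
      Rword (induce S E) (induce S f) (restrictWord S w') :=
  LinearMap.ext fun u => by
    simpa [Rword_extendDomain f hS] using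
      congrArg (fun g => (g u.extendDomain).subtypeDomain (· ∈ S)) h

lemma Rword_apply_eq_of_outClosed (hS : OutClosed E S) {w w' : FreeMonoid V}
    (h : Rword (induce S E) (induce S f) (restrictWord S w) =
      Rword (induce S E) (induce S f) (restrictWord S w'))
    (v : V →₀ R) {z : V} (hz : z ∈ S) : Rword E f w v z = Rword E f w' v z := by
  simpa [← subtypeDomain_Rword f hS] using
    congrArg (fun g => g (v.subtypeDomain (· ∈ S)) ⟨z, hz⟩) h

lemma Rword_single_eq_of_inClosed (hS : InClosed E S) {w w' : FreeMonoid V}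
    (h : Rword (induce S E) (induce S f) (restrictWord S w) =
      Rword (induce S E) (induce S f) (restrictWord S w'))
    {y : V} (hy : y ∈ S) (r : R) :
    Rword E f w (Finsupp.single y r) = Rword E f w' (Finsupp.single y r) := by
  simpa [← Rword_extendDomain f hS] using
    congrArg (fun g => (g (Finsupp.single ⟨y, hy⟩ r)).extendDomain) h

variable {a : V}

lemma Rword_apply_self_of_sink (ha : ∀ z, ¬E a z) (w : FreeMonoid V) (v : V →₀ R) :
    Rword E f w v a = if a ∈ w.toList then 0 else v a := by
  induction w using FreeMonoid.inductionOn' with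
  | one => simp
  | of_mul c w ih =>
    rw [map_mul, Module.End.mul_apply, Rword_of, theta_apply, ih]
    by_cases hac : a = c
    · subst hac; simp [ha]
    · simp [hac, ha]

lemma Rword_single_self_of_source (ha : ∀ z, ¬E z a) (w : FreeMonoid V) (r : R) :
    Rword E f w (Finsupp.single a r) = if a ∈ w.toList then 0 else Finsupp.single a r := by
  induction w using FreeMonoid.inductionOn' with
  | one => simp
  | of_mul c w ih =>
    rw [map_mul, Module.End.mul_apply, Rword_of, ih]
    by_cases haw : a ∈ w.toList
    · simp [haw]
    ext z
    by_cases hca : c = a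
    · subst hca; by_cases hzc : z = c <;> simp [theta_apply, haw, ha, hzc]
    · by_cases hzc : z = c <;>
        simp [theta_apply, haw, hca, Ne.symm hca, hzc, Finsupp.single_apply]

lemma mem_toList_iff_of_Rword_eq [Nontrivial R] (ha : (∀ z, ¬E z a) ∨ (∀ z, ¬E a z))
    {w w' : FreeMonoid V} (h : Rword E f w = Rword E f w') : a ∈ w.toList ↔ a ∈ w'.toList := by
  have key (w : FreeMonoid V) :
      Rword E f w (Finsupp.single a 1) a = if a ∈ w.toList then 0 else 1 := by
    rcases ha with hsrc | hsink
    · rw [Rword_single_self_of_source f hsrc]; split_ifs <;> simp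
    · simp [Rword_apply_self_of_sink f hsink]
  have := congrArg (fun g => g (Finsupp.single a 1) a) h
  simp only [key] at this
  split_ifs at this <;> simp_all

end Representation

structure IsGluing {V : Type*} (E : V → V → Prop) (S₁ S₂ : Set V) (a : V) : Prop where
  union_eq : S₁ ∪ S₂ = Set.univ
  inter_eq : S₁ ∩ S₂ = {a}
  edge_mem : ∀ x y, E x y → (x ∈ S₁ ∧ y ∈ S₁) ∨ (x ∈ S₂ ∧ y ∈ S₂)
  source_or_sink : (∀ z, ¬E z a) ∨ (∀ z, ¬E a z)

def IsEffective {V : Type*} [Fintype V] {R : Type*} [CommRing R] (E : V → V → Prop)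
    (f : V → V → R) : Prop :=
  ∀ w w' : FreeMonoid V, Rword E f w = Rword E f w' → HKmk E w = HKmk E w'

namespace IsGluing

variable {V : Type*} {E : V → V → Prop} {S₁ S₂ : Set V} {a : V}

lemma symm (hG : IsGluing E S₁ S₂ a) : IsGluing E S₂ S₁ a :=
  ⟨by rw [Set.union_comm, hG.union_eq], by rw [Set.inter_comm, hG.inter_eq],
    fun x y h => (hG.edge_mem x y h).symm, hG.source_or_sink⟩

lemma mem_left (hG : IsGluing E S₁ S₂ a) : a ∈ S₁ := (hG.inter_eq.ge rfl).1

lemma eq_of_mem_of_mem (hG : IsGluing E S₁ S₂ a) {x : V} (h₁ : x ∈ S₁) (h₂ : x ∈ S₂) :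
    x = a :=
  hG.inter_eq.le ⟨h₁, h₂⟩

lemma independent (hG : IsGluing E S₁ S₂ a) {c d : V} (hc : c ∈ S₁) (hca : c ≠ a)
    (hd : d ∈ S₂) (hda : d ≠ a) : c ≠ d ∧ ¬E c d ∧ ¬E d c := by
  refine ⟨fun h => hca (hG.eq_of_mem_of_mem hc (h ▸ hd)), fun h => ?_, fun h => ?_⟩ <;>
    rcases hG.edge_mem _ _ h with h' | h'
  · exact hda (hG.eq_of_mem_of_mem h'.2 hd)
  · exact hca (hG.eq_of_mem_of_mem hc h'.1)
  · exact hda (hG.eq_of_mem_of_mem h'.1 hd)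
  · exact hca (hG.eq_of_mem_of_mem hc h'.2)

lemma inClosed_left (hG : IsGluing E S₁ S₂ a) (ha : ∀ z, ¬E z a) : InClosed E S₁ :=
  fun z x hzx hx => (hG.edge_mem z x hzx).elim (·.1) fun h =>
    absurd (hG.eq_of_mem_of_mem hx h.2 ▸ hzx) (ha z)

lemma outClosed_left (hG : IsGluing E S₁ S₂ a) (ha : ∀ z, ¬E a z) : OutClosed E S₁ :=
  fun z x hzx hz => (hG.edge_mem z x hzx).elim (·.2) fun h =>
    absurd (hG.eq_of_mem_of_mem hz h.1 ▸ hzx) (ha x)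

lemma commute_HKmk_eraseOutside (hG : IsGluing E S₁ S₂ a) {u v : FreeMonoid V}
    (hu : a ∉ u.toList) (hv : a ∉ v.toList) :
    Commute (HKmk E (eraseOutside S₁ u)) (HKmk E (eraseOutside S₂ v)) :=
  commute_HKmk_of_forall E fun c hc d hd => by
    rw [mem_toList_eraseOutside] at hc hd
    exact hG.independent hc.1 (ne_of_mem_of_not_mem hc.2 hu) hd.1 (ne_of_mem_of_not_mem hd.2 hv)

lemma HKmk_eq_mul_of_notMem (hG : IsGluing E S₁ S₂ a) {u : FreeMonoid V} (hu : a ∉ u.toList) :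
    HKmk E u = HKmk E (eraseOutside S₁ u) * HKmk E (eraseOutside S₂ u) := by
  induction u using FreeMonoid.inductionOn' with
  | one => simp
  | of_mul c u ih =>
    simp only [toList_of_mul, List.mem_cons, not_or] at hu
    have hca : c ≠ a := Ne.symm hu.1
    rcases hG.union_eq.ge (Set.mem_univ c) with hc | hc
    · have hc₂ : c ∉ S₂ := fun h => hca (hG.eq_of_mem_of_mem hc h)
      simp [hc, hc₂, ih hu.2, mul_assoc]
    · have hc₁ : c ∉ S₁ := fun h => hca (hG.eq_of_mem_of_mem h hc)
      have hcomm := hG.commute_HKmk_eraseOutside hu.2 (v := of c) (by simpa using hu.1)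
      simp only [map_mul, eraseOutside_of_mem hc, eraseOutside_of_notMem hc₁, one_mul,
        ih hu.2] at hcomm ⊢
      rw [← mul_assoc, ← hcomm.eq, mul_assoc]

lemma HKmk_eraseOutside_of_eq_mul (hG : IsGluing E S₁ S₂ a) {w u v : FreeMonoid V}
    (hw : HKmk E w = HKmk E u * HKmk E (of a) * HKmk E v) :
    HKmk E (eraseOutside S₁ w) =
      HKmk E (eraseOutside S₁ u) * HKmk E (of a) * HKmk E (eraseOutside S₁ v) := by
  rw [← map_mul, ← map_mul] at hw
  simp [HKmk_eraseOutside_eq E hw, hG.mem_left]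

lemma HKmk_eq_mul_eraseOutside_mul (hG : IsGluing E S₁ S₂ a) {w u v : FreeMonoid V}
    (hw : HKmk E w = HKmk E u * HKmk E (of a) * HKmk E v) (hu : a ∉ u.toList)
    (hv : a ∉ v.toList) :
    HKmk E w =
      HKmk E (eraseOutside S₂ u) * HKmk E (eraseOutside S₁ w) * HKmk E (eraseOutside S₂ v) := by
  rw [hG.HKmk_eraseOutside_of_eq_mul hw, hw, hG.HKmk_eq_mul_of_notMem hu,
    hG.HKmk_eq_mul_of_notMem hv, (hG.commute_HKmk_eraseOutside hu hu).eq]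
  simp only [mul_assoc]

lemma HKmk_eq_of_HKmk_restrictWord_eq (hG : IsGluing E S₁ S₂ a) {w w' : FreeMonoid V}
    (hmem : a ∈ w.toList ↔ a ∈ w'.toList)
    (h₁ : HKmk (induce S₁ E) (restrictWord S₁ w) = HKmk (induce S₁ E) (restrictWord S₁ w'))
    (h₂ : HKmk (induce S₂ E) (restrictWord S₂ w) = HKmk (induce S₂ E) (restrictWord S₂ w')) :
    HKmk E w = HKmk E w' := by
  have e₁ : HKmk E (eraseOutside S₁ w) = HKmk E (eraseOutside S₁ w') := HKmk_map_val_eq E h₁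
  have e₂ : HKmk E (eraseOutside S₂ w) = HKmk E (eraseOutside S₂ w') := HKmk_map_val_eq E h₂
  by_cases ha : a ∈ w.toList
  swap
  · rw [hG.HKmk_eq_mul_of_notMem ha, hG.HKmk_eq_mul_of_notMem (mt hmem.2 ha), e₁, e₂]
  obtain ⟨u, v, hu, hv, hw⟩ := exists_HKmk_eq_mul_of_mul E hG.source_or_sink ha
  obtain ⟨u', v', hu', hv', hw'⟩ := exists_HKmk_eq_mul_of_mul E hG.source_or_sink (hmem.1 ha)
  calc HKmk E w
      = HKmk E (eraseOutside S₂ u) * HKmk E (eraseOutside S₁ w) * HKmk E (eraseOutside S₂ v) :=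
        hG.HKmk_eq_mul_eraseOutside_mul hw hu hv
    _ = (HKmk E (eraseOutside S₂ u) * HKmk E (eraseOutside S₁ u')) * HKmk E (of a) *
          (HKmk E (eraseOutside S₁ v') * HKmk E (eraseOutside S₂ v)) := by
        rw [e₁, hG.HKmk_eraseOutside_of_eq_mul hw']; simp only [mul_assoc]
    _ = (HKmk E (eraseOutside S₁ u') * HKmk E (eraseOutside S₂ u)) * HKmk E (of a) *
          (HKmk E (eraseOutside S₂ v) * HKmk E (eraseOutside S₁ v')) := by
        rw [(hG.commute_HKmk_eraseOutside hu' hu).eq, (hG.commute_HKmk_eraseOutside hv' hv).eq]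
    _ = HKmk E (eraseOutside S₁ u') * HKmk E (eraseOutside S₂ w') *
          HKmk E (eraseOutside S₁ v') := by
        rw [← e₂, hG.symm.HKmk_eraseOutside_of_eq_mul hw]; simp only [mul_assoc]
    _ = HKmk E w' := (hG.symm.HKmk_eq_mul_eraseOutside_mul hw' hu' hv').symm

variable [Fintype V] {R : Type*} [CommRing R] (f : V → V → R)

lemma Rword_eq_iff (hG : IsGluing E S₁ S₂ a) {w w' : FreeMonoid V} :
    Rword E f w = Rword E f w' ↔
      Rword (induce S₁ E) (induce S₁ f) (restrictWord S₁ w) =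
          Rword (induce S₁ E) (induce S₁ f) (restrictWord S₁ w') ∧
        Rword (induce S₂ E) (induce S₂ f) (restrictWord S₂ w) =
          Rword (induce S₂ E) (induce S₂ f) (restrictWord S₂ w') := by
  rcases hG.source_or_sink with ha | ha
  · have h₁ := hG.inClosed_left ha
    have h₂ := hG.symm.inClosed_left ha
    refine ⟨fun h => ⟨Rword_restrictWord_eq_of_inClosed f h₁ h,
      Rword_restrictWord_eq_of_inClosed f h₂ h⟩, fun ⟨e₁, e₂⟩ => Finsupp.lhom_ext fun y r => ?_⟩
    rcases hG.union_eq.ge (Set.mem_univ y) with hy | hy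
    exacts [Rword_single_eq_of_inClosed f h₁ e₁ hy r, Rword_single_eq_of_inClosed f h₂ e₂ hy r]
  · have h₁ := hG.outClosed_left ha
    have h₂ := hG.symm.outClosed_left ha
    refine ⟨fun h => ⟨Rword_restrictWord_eq_of_outClosed f h₁ h,
      Rword_restrictWord_eq_of_outClosed f h₂ h⟩,
      fun ⟨e₁, e₂⟩ => LinearMap.ext fun v => Finsupp.ext fun z => ?_⟩
    rcases hG.union_eq.ge (Set.mem_univ z) with hz | hz
    exacts [Rword_apply_eq_of_outClosed f h₁ e₁ v hz, Rword_apply_eq_of_outClosed f h₂ e₂ v hz]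

lemma Rword_restrictWord_map_val (hG : IsGluing E S₁ S₂ a) (w : FreeMonoid S₁) :
    Rword (induce S₂ E) (induce S₂ f) (restrictWord S₂ (map Subtype.val w)) =
      if ⟨a, hG.mem_left⟩ ∈ w.toList then
        theta (induce S₂ E) (induce S₂ f) ⟨a, hG.symm.mem_left⟩ else 1 := by
  induction w using FreeMonoid.inductionOn' with
  | one => simp
  | of_mul c w ih =>
    rw [map_mul, map_mul, map_mul, ih, map_of]
    by_cases hc : (c : V) = a
    · obtain rfl : c = ⟨a, hG.mem_left⟩ := Subtype.ext hc
      have hloop : ¬E a a := hG.source_or_sink.elim (· a) (· a)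
      rw [restrictWord_of_mem hG.symm.mem_left, Rword_of, toList_of_mul,
        if_pos List.mem_cons_self]
      split_ifs <;>
        simp [theta_mul_self (induce S₂ E) (induce S₂ f) (x := ⟨a, hG.symm.mem_left⟩) hloop]
    · have hc₂ : (c : V) ∉ S₂ := fun h => hc (hG.eq_of_mem_of_mem c.2 h)
      have hc' : c ≠ ⟨a, hG.mem_left⟩ := fun h => hc (congrArg Subtype.val h)
      simp [restrictWord_of_notMem hc₂, Ne.symm hc']

variable [Nontrivial R]

lemma isEffective_induce_left (hG : IsGluing E S₁ S₂ a) (h : IsEffective E f) :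
    IsEffective (induce S₁ E) (induce S₁ f) := by
  intro w w' hw
  have hmem := mem_toList_iff_of_Rword_eq (E := induce S₁ E) (induce S₁ f)
    (a := ⟨a, hG.mem_left⟩) (hG.source_or_sink.imp (fun h z => h z) fun h z => h z) hw
  have hR : Rword E f (map Subtype.val w) = Rword E f (map Subtype.val w') :=
    (hG.Rword_eq_iff f).2 ⟨by simpa using hw, by simp [hG.Rword_restrictWord_map_val, hmem]⟩
  simpa using HKmk_restrictWord_eq E (S := S₁) (h _ _ hR)

lemma isEffective_of_induce (hG : IsGluing E S₁ S₂ a)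
    (h₁ : IsEffective (induce S₁ E) (induce S₁ f))
    (h₂ : IsEffective (induce S₂ E) (induce S₂ f)) : IsEffective E f := by
  intro w w' hw
  obtain ⟨e₁, e₂⟩ := (hG.Rword_eq_iff f).1 hw
  exact hG.HKmk_eq_of_HKmk_restrictWord_eq (mem_toList_iff_of_Rword_eq f hG.source_or_sink hw)
    (h₁ _ _ e₁) (h₂ _ _ e₂)

end IsGluing

theorem hk_gluing_effective_iff_general {V : Type*} [Fintype V]
    {R : Type*} [CommRing R] [IsDomain R]
    (E : V → V → Prop)
    (S₁ S₂ : Set V) (a : V)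
    (hcover : S₁ ∪ S₂ = Set.univ) (hinter : S₁ ∩ S₂ = {a})
    (hedges : ∀ x y, E x y → (x ∈ S₁ ∧ y ∈ S₁) ∨ (x ∈ S₂ ∧ y ∈ S₂))
    (ha : (∀ z, ¬ E z a) ∨ (∀ z, ¬ E a z))
    (f : V → V → R) :
    ((∀ w w' : FreeMonoid V, Rword E f w = Rword E f w' → HKmk E w = HKmk E w') ↔
      ((∀ w w' : FreeMonoid S₁,
          Rword (fun x y : S₁ => E x y) (fun x y : S₁ => f x y) w =
            Rword (fun x y : S₁ => E x y) (fun x y : S₁ => f x y) w' →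
          HKmk (fun x y : S₁ => E x y) w = HKmk (fun x y : S₁ => E x y) w') ∧
        (∀ w w' : FreeMonoid S₂,
          Rword (fun x y : S₂ => E x y) (fun x y : S₂ => f x y) w =
            Rword (fun x y : S₂ => E x y) (fun x y : S₂ => f x y) w' →
          HKmk (fun x y : S₂ => E x y) w = HKmk (fun x y : S₂ => E x y) w'))) := by
  have hG : IsGluing E S₁ S₂ a := ⟨hcover, hinter, hedges, ha⟩
  exact ⟨fun h => ⟨hG.isEffective_induce_left f h, hG.symm.isEffective_induce_left f h⟩,
    fun h => hG.isEffective_of_induce f h.1 h.2⟩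

/-- Gluing theorem for effectiveness: if `Γ` is the union of two full subgraphs with no
common edges, meeting in a single vertex `a` which is a source or a sink, and `f` extends
the weight functions `f₁, f₂` of the pieces, then `R_f` is effective on `HK_Γ` if and only
if `R_{f₁}` and `R_{f₂}` are effective on `HK_{Γ₁}` and `HK_{Γ₂}`. -/
theorem hk_gluing_effective_iff {V : Type*} [Fintype V]
    {R : Type*} [CommRing R] [IsDomain R]
    (E : V → V → Prop) (hbidir : ∀ x y, ¬ (E x y ∧ E y x)) (hloop : ∀ x, ¬ E x x)
    (S₁ S₂ : Set V) (a : V)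
    (hcover : S₁ ∪ S₂ = Set.univ) (hinter : S₁ ∩ S₂ = {a})
    (hedges : ∀ x y, E x y → (x ∈ S₁ ∧ y ∈ S₁) ∨ (x ∈ S₂ ∧ y ∈ S₂))
    (hnoshared : ∀ x y, E x y → ¬ ((x ∈ S₁ ∧ y ∈ S₁) ∧ (x ∈ S₂ ∧ y ∈ S₂)))
    (ha : (∀ z, ¬ E z a) ∨ (∀ z, ¬ E a z))
    (f : V → V → R) (hf : ∀ x y, E x y → f x y ≠ 0) :
    ((∀ w w' : FreeMonoid V, Rword E f w = Rword E f w' → HKmk E w = HKmk E w') ↔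
      ((∀ w w' : FreeMonoid S₁,
          Rword (fun x y : S₁ => E x y) (fun x y : S₁ => f x y) w =
            Rword (fun x y : S₁ => E x y) (fun x y : S₁ => f x y) w' →
          HKmk (fun x y : S₁ => E x y) w = HKmk (fun x y : S₁ => E x y) w') ∧
        (∀ w w' : FreeMonoid S₂,
          Rword (fun x y : S₂ => E x y) (fun x y : S₂ => f x y) w =
            Rword (fun x y : S₂ => E x y) (fun x y : S₂ => f x y) w' →
          HKmk (fun x y : S₂ => E x y) w = HKmk (fun x y : S₂ => E x y) w'))) :=
  hk_gluing_effective_iff_general E S₁ S₂ a hcover hinter hedges ha f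
end
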